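/- arXiv:2510.13268 — 4 statements merged into one kernel-verified Lean document; each statement's English description precedes it below -/
import Mathlib

section
/- An instance of the Side-Access Compact Retrieval Problem is feasible (i.e., admits a retrieval schedule in which every target is accessible at the moment it is retrieved and every target is retrieved exactly once) if and only if for every target b ∈ B and every stack t with t < s(b) it holds that h(t) ≥ h(b) − R(b). -/
/-! # A model of the Side-Access Compact Retrieval Problem (SACRP)

A slice consists of stacks `0, 1, …, m-1`, stack `0` being on the
entry/exit side.  Stack `t` currently consists of unit loads at heights
`0, 1, …, h t - 1` (heights are 0-indexed from the bottom).  Targets are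
recorded by their current (stack, height) positions. -/

/-- An instance of the SACRP: `m` stacks with initial heights `height`,
and a pick-list `targets` of (stack, height) positions. -/
structure SACRP where
  m : ℕ
  height : ℕ → ℕ
  targets : Finset (ℕ × ℕ)

namespace SACRP

/-- Well-formedness: every target lies in an existing stack, at a height
below the top of its stack. -/
def WellFormed (I : SACRP) : Prop :=
  ∀ b ∈ I.targets, b.1 < I.m ∧ b.2 < I.height b.1

/-- `I.R b` : the number of targets initially positioned below `b` within
the same stack. -/
def R (I : SACRP) (b : ℕ × ℕ) : ℕ :=
  (I.targets.filter fun b' => b'.1 = b.1 ∧ b'.2 < b.2).card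

/-- A configuration during the retrieval process: current stack heights and
the current positions of the remaining (not yet retrieved) targets. -/
structure Config where
  height : ℕ → ℕ
  rem : Finset (ℕ × ℕ)

/-- The initial configuration of an instance. -/
def init (I : SACRP) : Config :=
  ⟨I.height, I.targets⟩

/-- A retrieval cycle: clearance levels `clear t` for every stack `t` (all
unit loads of stack `t` at heights `≥ clear t` are lifted for the whole
cycle), together with the sequence `seq` of retrieved targets, recorded by
their positions at the beginning of the cycle. -/
structure Cycle where
  clear : ℕ → ℕ
  seq : List (ℕ × ℕ)

/-- Residual height of stack `t` after the retrievals in `pre` have been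
performed in a cycle with clearance levels `clear`. -/
def dres (clear : ℕ → ℕ) (pre : List (ℕ × ℕ)) (t : ℕ) : ℕ :=
  clear t - (pre.filter fun b => b.1 = t).length

/-- Accessibility of the target at position `b` given residual heights `d`:
there is no unit load directly above it, and all stacks to its left have
residual height equal to its height. -/
def Accessible (d : ℕ → ℕ) (b : ℕ × ℕ) : Prop :=
  d b.1 = b.2 + 1 ∧ ∀ s < b.1, d s = b.2

/-- Validity of a cycle in a configuration: clearance levels are within
range, no target is retrieved twice, and every retrieved target is a
remaining target that is accessible at its retrieval step. -/
def ValidCycle (cfg : Config) (c : Cycle) : Prop :=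
  (∀ t, c.clear t ≤ cfg.height t) ∧ c.seq.Nodup ∧
    ∀ i : Fin c.seq.length,
      c.seq.get i ∈ cfg.rem ∧
        Accessible (dres c.clear (c.seq.take i)) (c.seq.get i)

/-- New position of a unit load after the unit loads at the positions in
`S` have been removed and the stacks have compacted downwards. -/
def fall (S : Finset (ℕ × ℕ)) (b : ℕ × ℕ) : ℕ × ℕ :=
  (b.1, b.2 - (S.filter fun a => a.1 = b.1 ∧ a.2 < b.2).card)

/-- The configuration obtained from `cfg` by removing a batch `S` of
positions and compacting all stacks downwards. -/
def removeBatch (cfg : Config) (S : Finset (ℕ × ℕ)) : Config :=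
  ⟨fun t => cfg.height t - (S.filter fun a => a.1 = t).card,
    (cfg.rem \ S).image (fall S)⟩

/-- The configuration at the end of a cycle: the retrieved targets are
removed, the lifted unit loads are lowered again and the stacks compact
downwards. -/
def Config.afterCycle (cfg : Config) (c : Cycle) : Config :=
  removeBatch cfg c.seq.toFinset

/-- Running a list of cycles from a configuration. -/
def runCycles (cfg : Config) : List Cycle → Config
  | [] => cfg
  | c :: cs => runCycles (cfg.afterCycle c) cs

/-- All cycles of a solution are valid, starting from configuration `cfg`. -/
def ValidFrom (cfg : Config) : List Cycle → Prop
  | [] => True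
  | c :: cs => ValidCycle cfg c ∧ ValidFrom (cfg.afterCycle c) cs

/-- A feasible solution of an instance: every cycle is valid and at the end
every target of the pick-list has been retrieved (exactly once, since
retrieved targets are removed from the configuration). -/
def Feasible (I : SACRP) (sol : List Cycle) : Prop :=
  ValidFrom I.init sol ∧ (runCycles I.init sol).rem = ∅

/-- A completion of a configuration: a valid sequence of cycles retrieving
all remaining targets. -/
def Completion (cfg : Config) (sol : List Cycle) : Prop :=
  ValidFrom cfg sol ∧ (runCycles cfg sol).rem = ∅

/-- Energy expenditure of one cycle: the number of lifted unit loads. -/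
def cycleEnergy (m : ℕ) (cfg : Config) (c : Cycle) : ℕ :=
  ∑ t ∈ Finset.range m, (cfg.height t - c.clear t)

/-- Total energy expenditure of a sequence of cycles started from `cfg`. -/
def energyFrom (m : ℕ) (cfg : Config) : List Cycle → ℕ
  | [] => 0
  | c :: cs => cycleEnergy m cfg c + energyFrom m (cfg.afterCycle c) cs

/-- Total energy expenditure of a solution. -/
def energy (I : SACRP) (sol : List Cycle) : ℕ :=
  energyFrom I.m I.init sol

/-! ## Geometry of batches -/

/-- The set of heights occurring in a batch. -/
def bheights (Y : Finset (ℕ × ℕ)) : Finset ℕ :=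
  Y.image Prod.snd

/-- The rightmost stack containing an element of the batch `Y` at height `x`. -/
def smax (Y : Finset (ℕ × ℕ)) (x : ℕ) : ℕ :=
  (Y.filter fun b => b.2 = x).sup Prod.fst

/-- Height-continuity: the distinct heights of the batch, listed in
increasing order, form a consecutive interval of integers. -/
def HeightContinuous (Y : Finset (ℕ × ℕ)) : Prop :=
  ((bheights Y).sort (· ≤ ·)).Chain' fun a b => b = a + 1

/-- `p` is a unimodal peak of the batch `Y`: the rightmost stacks `smax`
are non-decreasing on heights up to `p` and non-increasing from `p` on. -/
def IsPeak (Y : Finset (ℕ × ℕ)) (p : ℕ) : Prop :=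
  (∀ x ∈ bheights Y, ∀ y ∈ bheights Y, x ≤ y → y ≤ p → smax Y x ≤ smax Y y) ∧
  (∀ x ∈ bheights Y, ∀ y ∈ bheights Y, p ≤ x → x ≤ y → smax Y y ≤ smax Y x)

/-- Stack-unimodularity of a batch. -/
def StackUnimodular (Y : Finset (ℕ × ℕ)) : Prop :=
  ∃ p ∈ bheights Y, IsPeak Y p

/-- `x` and `y` are adjacent heights of the batch `Y` (`y` is the successor
height of `x` among the heights of `Y`). -/
def AdjHeights (Y : Finset (ℕ × ℕ)) (x y : ℕ) : Prop :=
  x ∈ bheights Y ∧ y ∈ bheights Y ∧ x < y ∧ ∀ z ∈ bheights Y, ¬(x < z ∧ z < y)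

/-- The unit load at position `b` belongs to `Y` or is absent (given the
current stack heights `H`). -/
def InOrAbsent (H : ℕ → ℕ) (Y : Finset (ℕ × ℕ)) (b : ℕ × ℕ) : Prop :=
  b ∈ Y ∨ H b.1 ≤ b.2

/-- Prefix-closedness of the batch `Y` with respect to the peak `p`: below
the peak, every unit load at the successor height in stacks up to `smax`
belongs to `Y` or is absent; symmetrically above the peak. -/
def PrefixCond (H : ℕ → ℕ) (Y : Finset (ℕ × ℕ)) (p : ℕ) : Prop :=
  ∀ x y, AdjHeights Y x y →
    (x < p → ∀ t ≤ smax Y x, InOrAbsent H Y (t, y)) ∧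
    (p < y → ∀ t ≤ smax Y y, InOrAbsent H Y (t, x))

/-- A weakly triangular batch: height-continuous, stack-unimodular and
prefix-closed (with respect to a common peak). -/
def WeaklyTriangular (H : ℕ → ℕ) (Y : Finset (ℕ × ℕ)) : Prop :=
  HeightContinuous Y ∧ ∃ p ∈ bheights Y, IsPeak Y p ∧ PrefixCond H Y p


/-! ### Auxiliary machinery for the feasibility characterization -/

/-- Number of positions of `S` strictly below `b` in the stack of `b`. -/
def kk (S : Finset (ℕ × ℕ)) (b : ℕ × ℕ) : ℕ :=
  (S.filter fun a => a.1 = b.1 ∧ a.2 < b.2).card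

/-- Number of remaining targets strictly below `b` in its stack. -/
def curR (cfg : Config) (b : ℕ × ℕ) : ℕ := kk cfg.rem b

/-- Well-formedness of a configuration. -/
def WFc (cfg : Config) : Prop := ∀ b ∈ cfg.rem, b.2 < cfg.height b.1

/-- The key invariant. -/
def Pc (cfg : Config) : Prop :=
  ∀ b ∈ cfg.rem, ∀ t < b.1, b.2 - curR cfg b ≤ cfg.height t

lemma nk_le (S : Finset ℕ) (h : ℕ) : (S.filter (· < h)).card ≤ h := by
  have hsub : S.filter (· < h) ⊆ Finset.range h := by
    intro x hx
    simp only [Finset.mem_filter] at hx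
    simpa using hx.2
  simpa using Finset.card_le_card hsub

lemma nk_strict (S : Finset ℕ) {x h : ℕ} (hx : x < h) (hxS : x ∉ S) :
    x - (S.filter (· < x)).card < h - (S.filter (· < h)).card := by
  have h1 : S.filter (· < h) ⊆ S.filter (· < x) ∪ Finset.Ico (x + 1) h := by
    intro a ha
    simp only [Finset.mem_filter, Finset.mem_union, Finset.mem_Ico] at ha ⊢
    rcases lt_trichotomy a x with h' | h' | h'
    · exact Or.inl ⟨ha.1, h'⟩
    · exact absurd (h' ▸ ha.1) hxS
    · exact Or.inr ⟨h', ha.2⟩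
  have h2 := (Finset.card_le_card h1).trans (Finset.card_union_le _ _)
  have h3 : (Finset.Ico (x + 1) h).card = h - (x + 1) := Nat.card_Ico _ _
  have h4 := nk_le S x
  omega

/-- Heights of the positions of `S` in stack `t`. -/
def hset (S : Finset (ℕ × ℕ)) (t : ℕ) : Finset ℕ :=
  (S.filter fun a => a.1 = t).image Prod.snd

lemma mem_hset {S : Finset (ℕ × ℕ)} {t x : ℕ} : x ∈ hset S t ↔ (t, x) ∈ S := by
  simp only [hset, Finset.mem_image, Finset.mem_filter]
  constructor
  · rintro ⟨a, ⟨haS, ha1⟩, ha2⟩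
    subst ha1; subst ha2
    rwa [Prod.mk.eta]
  · intro h; exact ⟨(t, x), ⟨h, rfl⟩, rfl⟩

lemma hset_card (S : Finset (ℕ × ℕ)) (t : ℕ) :
    (hset S t).card = (S.filter fun a => a.1 = t).card := by
  apply Finset.card_image_of_injOn
  intro x hx y hy hxy
  simp only [Finset.coe_filter, Set.mem_setOf_eq] at hx hy
  exact Prod.ext (hx.2.trans hy.2.symm) hxy

lemma kk_eq (S : Finset (ℕ × ℕ)) (b : ℕ × ℕ) :
    kk S b = ((hset S b.1).filter (· < b.2)).card := by
  rw [hset, Finset.filter_image, kk, Finset.filter_filter]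
  symm
  apply Finset.card_image_of_injOn
  intro x hx y hy hxy
  simp only [Finset.coe_filter, Set.mem_setOf_eq] at hx hy
  exact Prod.ext (hx.2.1.trans hy.2.1.symm) hxy

lemma kk_le_snd (S : Finset (ℕ × ℕ)) (b : ℕ × ℕ) : kk S b ≤ b.2 := by
  rw [kk_eq]; exact nk_le _ _

lemma kk_le_kk {S T : Finset (ℕ × ℕ)} (hST : S ⊆ T) (b : ℕ × ℕ) :
    kk S b ≤ kk T b :=
  Finset.card_le_card (Finset.filter_subset_filter _ hST)

lemma fall_strict {S : Finset (ℕ × ℕ)} {x b : ℕ × ℕ} (h1 : x.1 = b.1)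
    (h2 : x.2 < b.2) (hx : x ∉ S) : x.2 - kk S x < b.2 - kk S b := by
  rw [kk_eq, kk_eq, h1]
  refine nk_strict _ h2 ?_
  intro hm
  apply hx
  have : (b.1, x.2) ∈ S := mem_hset.1 hm
  rwa [← h1, Prod.mk.eta] at this

lemma fall_eq (S : Finset (ℕ × ℕ)) (b : ℕ × ℕ) :
    fall S b = (b.1, b.2 - kk S b) := rfl

lemma fall_fst (S : Finset (ℕ × ℕ)) (b : ℕ × ℕ) : (fall S b).1 = b.1 := rfl

lemma fall_snd (S : Finset (ℕ × ℕ)) (b : ℕ × ℕ) : (fall S b).2 = b.2 - kk S b := rfl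

lemma removeBatch_height (cfg : Config) (S : Finset (ℕ × ℕ)) (t : ℕ) :
    (removeBatch cfg S).height t = cfg.height t - (S.filter fun a => a.1 = t).card := rfl

lemma removeBatch_rem (cfg : Config) (S : Finset (ℕ × ℕ)) :
    (removeBatch cfg S).rem = (cfg.rem \ S).image (fall S) := rfl

lemma WFc_removeBatch {cfg : Config} {S : Finset (ℕ × ℕ)} (hS : S ⊆ cfg.rem)
    (hWF : WFc cfg) : WFc (removeBatch cfg S) := by
  rintro y hy
  rw [removeBatch_rem] at hy
  obtain ⟨b, hb, rfl⟩ := Finset.mem_image.1 hy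
  rw [Finset.mem_sdiff] at hb
  rw [fall_eq, removeBatch_height]
  show b.2 - kk S b < cfg.height b.1 - (S.filter fun a => a.1 = b.1).card
  have hall : (S.filter fun a => a.1 = b.1).card
      = ((hset S b.1).filter (· < cfg.height b.1)).card := by
    rw [← hset_card]
    congr 1
    symm
    apply Finset.filter_true_of_mem
    intro x hx
    have hxS : (b.1, x) ∈ S := mem_hset.1 hx
    have := hWF _ (hS hxS)
    simpa using this
  rw [kk_eq, hall]
  refine nk_strict _ (hWF b hb.1) ?_
  intro hm
  exact hb.2 (by rw [← Prod.mk.eta (p := b)]; exact mem_hset.1 hm)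

lemma curR_removeBatch {cfg : Config} {S : Finset (ℕ × ℕ)} (hS : S ⊆ cfg.rem)
    {b : ℕ × ℕ} (hb : b ∈ cfg.rem) (hbS : b ∉ S) :
    curR (removeBatch cfg S) (fall S b) = curR cfg b - kk S b := by
  have hset_eq :
      ((removeBatch cfg S).rem.filter fun x => x.1 = (fall S b).1 ∧ x.2 < (fall S b).2)
      = ((cfg.rem \ S).filter fun x => x.1 = b.1 ∧ x.2 < b.2).image (fall S) := by
    ext y
    rw [Finset.mem_filter]
    simp only [removeBatch_rem, Finset.mem_filter, Finset.mem_image, Finset.mem_sdiff,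
      fall_eq]
    constructor
    · rintro ⟨⟨x, ⟨hx1, hx2⟩, rfl⟩, h1, h2⟩
      simp only at h1 h2
      have hx2' : x.2 < b.2 := by
        rcases lt_trichotomy x.2 b.2 with h' | h' | h'
        · exact h'
        · exfalso
          have hxb : x = b := Prod.ext h1 h'
          subst hxb; omega
        · exfalso
          have := fall_strict (x := b) (b := x) h1.symm h' hbS
          omega
      exact ⟨x, ⟨⟨hx1, hx2⟩, h1, hx2'⟩, rfl⟩
    · rintro ⟨x, ⟨⟨hx1, hx2⟩, h1, h2⟩, rfl⟩
      refine ⟨⟨x, ⟨hx1, hx2⟩, rfl⟩, h1, ?_⟩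
      simpa using fall_strict h1 h2 hx2
  have hinj : Set.InjOn (fall S)
      ((cfg.rem \ S).filter fun x => x.1 = b.1 ∧ x.2 < b.2) := by
    intro x hx y hy hxy
    simp only [Finset.coe_filter, Finset.mem_sdiff, Set.mem_setOf_eq] at hx hy
    have h1 : x.1 = y.1 := by rw [hx.2.1, hy.2.1]
    rcases lt_trichotomy x.2 y.2 with h' | h' | h'
    · exfalso
      have := fall_strict h1 h' hx.1.2
      rw [fall_eq, fall_eq] at hxy
      have := congrArg Prod.snd hxy
      simp only at this
      omega
    · exact Prod.ext h1 h'
    · exfalso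
      have := fall_strict h1.symm h' hy.1.2
      rw [fall_eq, fall_eq] at hxy
      have := congrArg Prod.snd hxy
      simp only at this
      omega
  have hsdiff : ((cfg.rem \ S).filter fun x => x.1 = b.1 ∧ x.2 < b.2)
      = (cfg.rem.filter fun x => x.1 = b.1 ∧ x.2 < b.2)
        \ (S.filter fun x => x.1 = b.1 ∧ x.2 < b.2) := by
    ext x
    simp only [Finset.mem_filter, Finset.mem_sdiff]
    tauto
  have hsub : (S.filter fun x => x.1 = b.1 ∧ x.2 < b.2)
      ⊆ (cfg.rem.filter fun x => x.1 = b.1 ∧ x.2 < b.2) :=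
    Finset.filter_subset_filter _ hS
  calc curR (removeBatch cfg S) (fall S b)
      = (((cfg.rem \ S).filter fun x => x.1 = b.1 ∧ x.2 < b.2).image (fall S)).card := by
        rw [curR, kk, hset_eq]
    _ = ((cfg.rem \ S).filter fun x => x.1 = b.1 ∧ x.2 < b.2).card :=
        Finset.card_image_of_injOn hinj
    _ = curR cfg b - kk S b := by
        rw [hsdiff, Finset.card_sdiff_of_subset hsub]; rfl

lemma seq_mem {cfg : Config} {c : Cycle} (hv : ValidCycle cfg c) :
    ∀ b ∈ c.seq, b ∈ cfg.rem := by
  intro b hb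
  obtain ⟨i, rfl⟩ := List.mem_iff_get.1 hb
  exact (hv.2.2 i).1

lemma forward_aux : ∀ (sol : List Cycle) (cfg : Config),
    ValidFrom cfg sol → (runCycles cfg sol).rem = ∅ → WFc cfg → Pc cfg := by
  intro sol
  induction sol with
  | nil =>
    intro cfg _ hempty _ b hb
    rw [runCycles] at hempty
    rw [hempty] at hb
    exact absurd hb (Finset.notMem_empty b)
  | cons c cs ih =>
    intro cfg hval hempty hWF
    obtain ⟨hv, hrest⟩ := hval
    have hS : c.seq.toFinset ⊆ cfg.rem := fun b hb => seq_mem hv b (List.mem_toFinset.1 hb)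
    have hWF' := WFc_removeBatch hS hWF
    have hP' : Pc (removeBatch cfg c.seq.toFinset) := ih _ hrest hempty hWF'
    intro b hb t ht
    by_cases hbS : b ∈ c.seq.toFinset
    · obtain ⟨i, rfl⟩ := List.mem_iff_get.1 (List.mem_toFinset.1 hbS)
      have hacc := (hv.2.2 i).2
      have h1 := hacc.2 t ht
      have h2 : (c.seq.get i).2 ≤ c.clear t := by
        rw [← h1]; exact Nat.sub_le _ _
      have h3 := le_trans h2 (hv.1 t)
      exact le_trans (Nat.sub_le _ _) h3
    · have hbmem : b ∈ cfg.rem \ c.seq.toFinset := Finset.mem_sdiff.2 ⟨hb, hbS⟩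
      have hfmem : fall c.seq.toFinset b ∈ (removeBatch cfg c.seq.toFinset).rem := by
        rw [removeBatch_rem]
        exact Finset.mem_image_of_mem _ hbmem
      have h2 := hP' _ hfmem t ht
      rw [curR_removeBatch hS hb hbS, fall_snd, removeBatch_height] at h2
      have h5 := kk_le_snd c.seq.toFinset b
      have h6 : kk c.seq.toFinset b ≤ curR cfg b := kk_le_kk hS b
      have h7 : curR cfg b = kk cfg.rem b := rfl
      omega

lemma reverse_aux : ∀ (n : ℕ) (cfg : Config), cfg.rem.card ≤ n → WFc cfg → Pc cfg →
    ∃ sol, Completion cfg sol := by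
  intro n
  induction n with
  | zero =>
    intro cfg hcard _ _
    have : cfg.rem = ∅ := Finset.card_eq_zero.1 (Nat.le_zero.1 hcard)
    exact ⟨[], trivial, this⟩
  | succ n ih =>
    intro cfg hcard hWF hP
    rcases Finset.eq_empty_or_nonempty cfg.rem with he | hne
    · exact ⟨[], trivial, he⟩
    obtain ⟨b0, hb0, hmax⟩ := cfg.rem.exists_max_image Prod.fst hne
    set u := b0.1 with hu
    have hfne : (cfg.rem.filter fun x => x.1 = u).Nonempty :=
      ⟨b0, Finset.mem_filter.2 ⟨hb0, rfl⟩⟩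
    obtain ⟨a, ha_mem, hmin⟩ :=
      (cfg.rem.filter fun x => x.1 = u).exists_min_image Prod.snd hfne
    rw [Finset.mem_filter] at ha_mem
    obtain ⟨ha_rem, ha_u⟩ := ha_mem
    have hcurR : curR cfg a = 0 := by
      rw [curR, kk, Finset.card_eq_zero]
      rw [Finset.filter_eq_empty_iff]
      intro x hx
      rintro ⟨hx1, hx2⟩
      have := hmin x (Finset.mem_filter.2 ⟨hx, by rw [hx1, ha_u]⟩)
      omega
    set c : Cycle := ⟨fun t => if t < u then a.2 else if t = u then a.2 + 1 else 0, [a]⟩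
      with hc
    have hclear : ∀ t, c.clear t ≤ cfg.height t := by
      intro t
      show (if t < u then a.2 else if t = u then a.2 + 1 else 0) ≤ cfg.height t
      rcases lt_trichotomy t u with h' | h' | h'
      · rw [if_pos h']
        have := hP a ha_rem t (by rw [ha_u]; exact h')
        rw [hcurR] at this
        omega
      · rw [if_neg (by omega), if_pos h']
        have := hWF a ha_rem
        rw [ha_u] at this
        subst h'
        omega
      · rw [if_neg (by omega), if_neg (by omega)]
        exact Nat.zero_le _
    have hvalid : ValidCycle cfg c := by
      refine ⟨hclear, by simp [hc], ?_⟩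
      intro i
      have hi : (i : ℕ) = 0 := by
        have := i.isLt
        simp only [hc, List.length_singleton] at this
        omega
      have hget : c.seq.get i = a := by
        simp [hc, List.get_eq_getElem, hi]
      have htake : c.seq.take i = [] := by
        rw [hi, List.take_zero]
      refine ⟨by rw [hget]; exact ha_rem, ?_⟩
      rw [hget, htake]
      have hdres : ∀ t, dres c.clear [] t = c.clear t := by
        intro t; simp [dres]
      constructor
      · rw [hdres, ha_u]
        show (if u < u then a.2 else if u = u then a.2 + 1 else 0) = a.2 + 1
        rw [if_neg (lt_irrefl u), if_pos rfl]
      · intro s hs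
        rw [hdres]
        show (if s < u then a.2 else if s = u then a.2 + 1 else 0) = a.2
        rw [ha_u] at hs
        rw [if_pos hs]
    have hSfin : c.seq.toFinset = {a} := by simp [hc]
    have hS : ({a} : Finset (ℕ × ℕ)) ⊆ cfg.rem := by
      intro x hx
      rw [Finset.mem_singleton] at hx
      rw [hx]; exact ha_rem
    have hafter : cfg.afterCycle c = removeBatch cfg {a} := by
      rw [Config.afterCycle, hSfin]
    have hcard' : (cfg.afterCycle c).rem.card ≤ n := by
      rw [hafter, removeBatch_rem]
      have h1 := Finset.card_image_le (s := cfg.rem \ {a}) (f := fall {a})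
      have h2 : (cfg.rem \ {a}).card = cfg.rem.card - 1 := by
        rw [Finset.sdiff_singleton_eq_erase, Finset.card_erase_of_mem ha_rem]
      have h3 : 1 ≤ cfg.rem.card := Finset.card_pos.2 hne
      omega
    have hWF' : WFc (cfg.afterCycle c) := by
      rw [hafter]; exact WFc_removeBatch hS hWF
    have hP' : Pc (cfg.afterCycle c) := by
      rw [hafter]
      intro y hy t ht
      rw [removeBatch_rem] at hy
      obtain ⟨b, hbmem, rfl⟩ := Finset.mem_image.1 hy
      rw [Finset.mem_sdiff, Finset.mem_singleton] at hbmem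
      obtain ⟨hb, hba⟩ := hbmem
      have hbne : b ∉ ({a} : Finset (ℕ × ℕ)) := by
        rw [Finset.mem_singleton]; exact hba
      rw [curR_removeBatch hS hb hbne, fall_snd]
      rw [fall_fst] at ht
      have hheight : (removeBatch cfg {a} : Config).height t = cfg.height t := by
        rw [removeBatch_height]
        have : ({a} : Finset (ℕ × ℕ)).filter (fun x => x.1 = t) = ∅ := by
          rw [Finset.filter_singleton, if_neg]
          have hb1 : b.1 ≤ u := hmax b hb
          rw [ha_u]
          omega
        rw [this]
        simp
      rw [hheight]
      have h5 := kk_le_snd ({a} : Finset (ℕ × ℕ)) b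
      have h6 := kk_le_kk hS b
      have h7 := hP b hb t ht
      have h8 : curR cfg b = kk cfg.rem b := rfl
      omega
    obtain ⟨sol', hsol'⟩ := ih (cfg.afterCycle c) hcard' hWF' hP'
    exact ⟨c :: sol', ⟨hvalid, hsol'.1⟩, hsol'.2⟩

/-- An instance of the SACRP is feasible — i.e., admits a
retrieval schedule in which every target is accessible at the moment it is
retrieved and every target is retrieved exactly once — if and only if for
every target `b` of the pick-list and every stack `t < s b` one has
`h t ≥ h b − R b`. -/
theorem feasibility_characterization (I : SACRP) (hwf : I.WellFormed) :
    (∃ sol : List Cycle, I.Feasible sol) ↔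
      ∀ b ∈ I.targets, ∀ t < b.1, b.2 - I.R b ≤ I.height t := by
  have hWF : WFc I.init := fun b hb => (hwf b hb).2
  constructor
  · rintro ⟨sol, hval, hempty⟩ b hb t ht
    exact forward_aux sol I.init hval hempty hWF b hb t ht
  · intro h
    obtain ⟨sol, h1, h2⟩ := reverse_aux I.init.rem.card I.init le_rfl hWF
      (fun b hb t ht => h b hb t ht)
    exact ⟨sol, h1, h2⟩

end SACRP
end

section
/- If for every target b ∈ B and every stack t < s(b) it holds that h(t) ≥ h(b) − R(b), then the schedule that retrieves the targets one per cycle, processing stacks from right to left (largest stack index first) and, within each stack, from bottom to top, is a feasible solution: at the moment each target b is retrieved its current height equals h(b) − R(b), every stack to its left still has its original height, and b is accessible under the clearance levels ℓ_c(s(b)) = h_c(b)+1, ℓ_c(t) = h_c(b) for t < s(b), and ℓ_c(t) = h_c(t) for t > s(b). -/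
namespace SACRP

/-- Right-to-left, bottom-to-top order on targets: `a` precedes `b` iff `a`
is in a stack further from the entry, or in the same stack at a lower
height. -/
def RightToLeftBottomToTop (a b : ℕ × ℕ) : Prop :=
  b.1 < a.1 ∨ (a.1 = b.1 ∧ a.2 < b.2)

/-- Number of elements of `l` located in stack `t`. -/
def countStack (l : List (ℕ × ℕ)) (t : ℕ) : ℕ :=
  (l.filter fun b => b.1 = t).length

/-- The cycle of the schedule retrieving the `j`-th target `b` of the
enumeration `L`: the single target `b` is retrieved, at its current height
`h b − R b`, with clearance levels `ℓ (s b) = h_c b + 1`, `ℓ t = h_c b` for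
`t < s b`, and `ℓ t = h_c t` (the current height of stack `t`) for
`t > s b`. -/
def scheduleCycle (I : SACRP) (L : List (ℕ × ℕ)) (j : ℕ) (b : ℕ × ℕ) : Cycle where
  clear := fun t =>
    if t < b.1 then b.2 - I.R b
    else if t = b.1 then (b.2 - I.R b) + 1
    else I.height t - countStack (L.take j) t
  seq := [(b.1, b.2 - I.R b)]

/-- The schedule retrieving the targets one per cycle in the order given by
the enumeration `L`. -/
def schedule (I : SACRP) (L : List (ℕ × ℕ)) : List Cycle :=
  L.zipIdx.map fun jb => scheduleCycle I L jb.2 jb.1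

/-! ## Auxiliary development for Statement 1 -/

def cnt (L : List (ℕ × ℕ)) (j : ℕ) (b : ℕ × ℕ) : ℕ :=
  ((L.take j).filter fun a => a.1 = b.1 ∧ a.2 < b.2).length

def pos (L : List (ℕ × ℕ)) (j : ℕ) (b : ℕ × ℕ) : ℕ × ℕ := (b.1, b.2 - cnt L j b)

def mcfg (I : SACRP) (L : List (ℕ × ℕ)) (j : ℕ) : Config :=
  ⟨fun t => I.height t - countStack (L.take j) t, (L.drop j).toFinset.image (pos L j)⟩

lemma cfg_ext {c d : Config} (h1 : c.height = d.height) (h2 : c.rem = d.rem) :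
    c = d := by
  cases c; cases d; cases h1; cases h2; rfl

lemma runCycles_append (cfg : Config) (l1 l2 : List Cycle) :
    runCycles cfg (l1 ++ l2) = runCycles (runCycles cfg l1) l2 := by
  induction l1 generalizing cfg with
  | nil => rfl
  | cons c cs ih => simp only [List.cons_append, runCycles]; exact ih _

lemma validFrom_concat {cfg : Config} {l : List Cycle} {c : Cycle}
    (h1 : ValidFrom cfg l) (h2 : ValidCycle (runCycles cfg l) c) :
    ValidFrom cfg (l ++ [c]) := by
  induction l generalizing cfg with
  | nil => exact ⟨h2, trivial⟩
  | cons d ds ih => exact ⟨h1.1, ih h1.2 h2⟩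

lemma rtl_ne {a b : ℕ × ℕ} (h : RightToLeftBottomToTop a b) : a ≠ b := by
  rintro rfl
  rcases h with h | ⟨_, h⟩ <;> exact lt_irrefl _ h

section

variable {I : SACRP} {L : List (ℕ × ℕ)} {j : ℕ}

lemma split_L (hj : j < L.length) : L = L.take j ++ L[j] :: L.drop (j+1) := by
  conv_lhs => rw [← List.take_append_drop j L]
  rw [List.drop_eq_getElem_cons hj]

lemma pairwise_split (hs : L.Pairwise RightToLeftBottomToTop) (hj : j < L.length) :
    (∀ a ∈ L.take j, RightToLeftBottomToTop a L[j]) ∧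
    (∀ c ∈ L.drop (j+1), RightToLeftBottomToTop L[j] c) := by
  have h := hs
  rw [split_L hj, List.pairwise_append, List.pairwise_cons] at h
  exact ⟨fun a ha => h.2.2 a ha _ List.mem_cons_self, h.2.1.1⟩

lemma L_nodup (hs : L.Pairwise RightToLeftBottomToTop) : L.Nodup :=
  hs.imp fun h => rtl_ne h

lemma R_le_snd (I : SACRP) (b : ℕ × ℕ) : I.R b ≤ b.2 := by
  classical
  have h : (I.targets.filter fun b' => b'.1 = b.1 ∧ b'.2 < b.2).card
      ≤ (Finset.range b.2).card := by
    apply Finset.card_le_card_of_injOn Prod.snd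
    · intro a ha
      simp only [Finset.mem_coe, Finset.mem_filter] at ha
      simpa using ha.2.2
    · intro a ha c hc h
      simp only [Finset.coe_filter, Set.mem_setOf_eq] at ha hc
      exact Prod.ext (ha.2.1.trans hc.2.1.symm) h
  simpa [R] using h

lemma toFinset_eq_targets (hmem : ∀ b, b ∈ L ↔ b ∈ I.targets) :
    L.toFinset = I.targets := by
  ext b; simp [hmem b]

lemma cnt_eq_R (hmem : ∀ b, b ∈ L ↔ b ∈ I.targets)
    (hs : L.Pairwise RightToLeftBottomToTop) (hj : j < L.length) :
    cnt L j L[j] = I.R L[j] := by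
  classical
  have hnd := L_nodup hs
  have hpost := (pairwise_split hs hj).2
  have hdrop : ((L.drop j).filter fun a => a.1 = L[j].1 ∧ a.2 < L[j].2) = [] := by
    rw [List.filter_eq_nil_iff]
    intro a ha
    rw [List.drop_eq_getElem_cons hj, List.mem_cons] at ha
    simp only [decide_eq_true_eq, not_and, not_lt]
    rcases ha with rfl | ha
    · intro _; exact le_refl _
    · intro h1
      rcases hpost a ha with h | ⟨h2, h3⟩
      · omega
      · omega
  have hfull : cnt L j L[j]
      = ((L.filter fun a => a.1 = L[j].1 ∧ a.2 < L[j].2)).length := by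
    have h2 : (L.filter fun a => a.1 = L[j].1 ∧ a.2 < L[j].2)
        = ((L.take j ++ L.drop j).filter fun a => a.1 = L[j].1 ∧ a.2 < L[j].2) := by
      rw [List.take_append_drop]
    rw [h2, List.filter_append, hdrop, List.append_nil]
    rfl
  rw [hfull, R, ← toFinset_eq_targets hmem]
  rw [← List.toFinset_card_of_nodup (hnd.filter _), List.toFinset_filter]
  congr 1
  apply Finset.filter_congr
  intro x _
  simp

lemma countStack_take_of_lt (hs : L.Pairwise RightToLeftBottomToTop)
    (hj : j < L.length) {t : ℕ} (ht : t < L[j].1) :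
    countStack (L.take j) t = 0 := by
  have hpre := (pairwise_split hs hj).1
  unfold countStack
  rw [List.length_eq_zero_iff, List.filter_eq_nil_iff]
  intro a ha
  rcases hpre a ha with h | ⟨h, _⟩ <;> simp <;> omega

lemma countStack_take_eq (hmem : ∀ b, b ∈ L ↔ b ∈ I.targets)
    (hs : L.Pairwise RightToLeftBottomToTop) (hj : j < L.length) :
    countStack (L.take j) L[j].1 = I.R L[j] := by
  have hpre := (pairwise_split hs hj).1
  rw [← cnt_eq_R hmem hs hj]
  unfold countStack cnt
  congr 1
  apply List.filter_congr
  intro a ha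
  simp only [decide_eq_true_eq, decide_eq_decide]
  constructor
  · intro h
    refine ⟨h, ?_⟩
    rcases hpre a ha with h' | ⟨_, h'⟩
    · omega
    · exact h'
  · exact fun h => h.1

lemma cnt_succ (hj : j < L.length) (c : ℕ × ℕ) :
    cnt L (j+1) c = cnt L j c + (if L[j].1 = c.1 ∧ L[j].2 < c.2 then 1 else 0) := by
  unfold cnt
  rw [List.take_succ, List.getElem?_eq_getElem hj]
  simp only [Option.toList_some, List.filter_append, List.length_append]
  congr 1
  rcases Decidable.em (L[j].1 = c.1 ∧ L[j].2 < c.2) with h | h <;> simp [h]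

lemma mem_take_ne (hs : L.Pairwise RightToLeftBottomToTop) (hj : j < L.length)
    {a : ℕ × ℕ} (ha : a ∈ L.take j) : a ≠ L[j] :=
  rtl_ne ((pairwise_split hs hj).1 a ha)

/-- The key counting bound: a later target in the same stack sits strictly
higher than the current target even after compaction. -/
lemma pos_bound (hmem : ∀ b, b ∈ L ↔ b ∈ I.targets)
    (hs : L.Pairwise RightToLeftBottomToTop) (hj : j < L.length)
    {c : ℕ × ℕ} (hc : c ∈ L.drop (j+1)) (hcs : c.1 = L[j].1) :
    L[j].2 - I.R L[j] < c.2 - cnt L j c := by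
  classical
  set b := L[j] with hb
  have hb2 : b.2 < c.2 := by
    rcases (pairwise_split hs hj).2 c hc with h | ⟨_, h⟩
    · rw [← hb] at h; omega
    · rw [← hb] at h; exact h
  have hRle : I.R b ≤ b.2 := R_le_snd I b
  have hcntb : cnt L j b = I.R b := cnt_eq_R hmem hs hj
  -- split the count for `c`
  have hsplit : cnt L j c
      = ((L.take j).filter fun a => a.1 = b.1 ∧ a.2 < b.2).length
        + (((L.take j).filter fun a => a.1 = c.1 ∧ a.2 < c.2).filter
            fun a => ¬ a.2 < b.2).length := by
    unfold cnt
    rw [List.length_eq_length_filter_add (fun a => decide (a.2 < b.2))]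
    congr 2
    · rw [List.filter_filter]
      apply List.filter_congr
      intro a _
      rw [← Bool.decide_and, decide_eq_decide]
      constructor
      · rintro ⟨h1, h2, _⟩; exact ⟨h2.trans hcs, h1⟩
      · rintro ⟨h1, h2⟩; exact ⟨h2, h1.trans hcs.symm, by omega⟩
    · apply List.filter_congr
      intro a _
      rcases Nat.lt_or_ge a.2 b.2 with h | h
      · simp [h, Nat.not_le.mpr h]
      · simp [h, Nat.not_lt.mpr h]
  set g := ((L.take j).filter fun a => a.1 = c.1 ∧ a.2 < c.2).filter
      fun a => ¬ a.2 < b.2 with hg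
  have hglen : g.length ≤ c.2 - b.2 - 1 := by
    have hgnd : g.Nodup := (((L_nodup hs).sublist (List.take_sublist j L)).filter _).filter _
    have hmemg : ∀ a ∈ g, a.1 = b.1 ∧ b.2 < a.2 ∧ a.2 < c.2 := by
      intro a ha
      rw [hg, List.mem_filter, List.mem_filter] at ha
      obtain ⟨⟨hat, ha2⟩, ha3⟩ := ha
      simp only [decide_eq_true_eq, decide_not, Bool.not_eq_true', decide_eq_false_iff_not,
        not_lt] at ha2 ha3
      have hane : a ≠ b := mem_take_ne hs hj hat
      refine ⟨ha2.1.trans hcs, ?_, ha2.2⟩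
      rcases lt_or_eq_of_le ha3 with h | h
      · exact h
      · exact absurd (Prod.ext (ha2.1.trans hcs) h.symm) hane
    rw [← List.toFinset_card_of_nodup hgnd]
    calc g.toFinset.card ≤ (Finset.Ioo b.2 c.2).card := by
          apply Finset.card_le_card_of_injOn Prod.snd
          · intro a ha
            rw [Finset.mem_coe, List.mem_toFinset] at ha
            obtain ⟨_, h1, h2⟩ := hmemg a ha
            simp [h1, h2]
          · intro a ha c' hc' h
            rw [Finset.mem_coe, List.mem_toFinset] at ha hc'
            exact Prod.ext ((hmemg a ha).1.trans (hmemg c' hc').1.symm) h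
      _ = c.2 - b.2 - 1 := Nat.card_Ioo _ _
  have : cnt L j c ≤ I.R b + (c.2 - b.2 - 1) := by
    rw [hsplit]
    have : ((L.take j).filter fun a => a.1 = b.1 ∧ a.2 < b.2).length = I.R b := hcntb
    omega
  omega

lemma pos_mem_mcfg (hmem : ∀ b, b ∈ L ↔ b ∈ I.targets)
    (hs : L.Pairwise RightToLeftBottomToTop) (hj : j < L.length) :
    (L[j].1, L[j].2 - I.R L[j]) ∈ (mcfg I L j).rem := by
  apply Finset.mem_image.mpr
  refine ⟨L[j], ?_, ?_⟩
  · rw [List.mem_toFinset, List.drop_eq_getElem_cons hj]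
    exact List.mem_cons_self
  · rw [pos, cnt_eq_R hmem hs hj]

end


section

variable {I : SACRP} {L : List (ℕ × ℕ)} {j : ℕ}

lemma schedule_length (I : SACRP) (L : List (ℕ × ℕ)) :
    (schedule I L).length = L.length := by
  simp [schedule]

lemma schedule_take_succ (I : SACRP) (hj : j < L.length) :
    (schedule I L).take (j+1)
      = (schedule I L).take j ++ [scheduleCycle I L j L[j]] := by
  have hj' : j < (schedule I L).length := by rw [schedule_length]; exact hj
  rw [List.take_succ, List.getElem?_eq_getElem hj']
  simp [schedule]

lemma valid_step (hwf : I.WellFormed)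
    (hcond : ∀ b ∈ I.targets, ∀ t < b.1, b.2 - I.R b ≤ I.height t)
    (hmem : ∀ b, b ∈ L ↔ b ∈ I.targets)
    (hs : L.Pairwise RightToLeftBottomToTop) (hj : j < L.length) :
    ValidCycle (mcfg I L j) (scheduleCycle I L j L[j]) := by
  have hbT : L[j] ∈ I.targets := (hmem _).1 (List.getElem_mem hj)
  have hRle := R_le_snd I L[j]
  have hhb : L[j].2 < I.height L[j].1 := (hwf _ hbT).2
  refine ⟨?_, by simp [scheduleCycle], ?_⟩
  · intro t
    show (if t < L[j].1 then L[j].2 - I.R L[j]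
        else if t = L[j].1 then (L[j].2 - I.R L[j]) + 1
        else I.height t - countStack (L.take j) t)
      ≤ I.height t - countStack (L.take j) t
    rcases lt_trichotomy t L[j].1 with h | h | h
    · rw [if_pos h, countStack_take_of_lt hs hj h, Nat.sub_zero]
      exact hcond _ hbT t h
    · rw [if_neg (by omega), if_pos h, h, countStack_take_eq hmem hs hj]
      omega
    · rw [if_neg (by omega), if_neg (by omega)]
  · intro i
    have hiv : (i : ℕ) = 0 := by
      have := i.isLt
      simp only [scheduleCycle, List.length_singleton] at this
      omega
    have hget : (scheduleCycle I L j L[j]).seq.get i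
        = (L[j].1, L[j].2 - I.R L[j]) := by
      have hi0 : i = ⟨0, by simp [scheduleCycle]⟩ := Fin.ext hiv
      subst hi0
      rfl
    rw [hget]
    refine ⟨pos_mem_mcfg hmem hs hj, ?_, ?_⟩
    · show dres _ _ _ = _
      rw [hiv]
      simp [dres, scheduleCycle]
    · intro s hs'
      show dres _ _ _ = _
      rw [hiv]
      simp [dres, scheduleCycle, hs']

lemma after_step (hmem : ∀ b, b ∈ L ↔ b ∈ I.targets)
    (hs : L.Pairwise RightToLeftBottomToTop) (hj : j < L.length) :
    (mcfg I L j).afterCycle (scheduleCycle I L j L[j]) = mcfg I L (j+1) := by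
  classical
  have hcntb : cnt L j L[j] = I.R L[j] := cnt_eq_R hmem hs hj
  have hS : (scheduleCycle I L j L[j]).seq.toFinset
      = {(L[j].1, L[j].2 - I.R L[j])} := by simp [scheduleCycle]
  rw [Config.afterCycle, hS, removeBatch, mcfg, mcfg]
  congr 1
  · funext t
    rw [Finset.filter_singleton]
    have hcs : countStack (L.take (j+1)) t
        = countStack (L.take j) t + (if L[j].1 = t then 1 else 0) := by
      unfold countStack
      rw [List.take_succ, List.getElem?_eq_getElem hj]
      simp only [Option.toList_some, List.filter_append, List.length_append]
      congr 1
      rcases Decidable.em (L[j].1 = t) with h | h <;> simp [h]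
    rw [hcs]
    split_ifs with h <;> simp
    omega
  · have hdropj : (L.drop j).toFinset = insert L[j] (L.drop (j+1)).toFinset := by
      rw [List.drop_eq_getElem_cons hj, List.toFinset_cons]
    rw [hdropj, Finset.image_insert]
    have hposb : pos L j L[j] = (L[j].1, L[j].2 - I.R L[j]) := by rw [pos, hcntb]
    rw [hposb]
    have hnotmem : (L[j].1, L[j].2 - I.R L[j])
        ∉ (L.drop (j+1)).toFinset.image (pos L j) := by
      rw [Finset.mem_image]
      rintro ⟨c, hc, hpc⟩
      rw [List.mem_toFinset] at hc
      rw [pos, Prod.mk.injEq] at hpc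
      have := pos_bound hmem hs hj hc hpc.1
      omega
    rw [Finset.sdiff_singleton_eq_erase, Finset.erase_insert hnotmem,
      Finset.image_image]
    apply Finset.image_congr
    intro c hc
    rw [Finset.mem_coe, List.mem_toFinset] at hc
    show fall _ (pos L j c) = pos L (j+1) c
    rw [fall, pos, pos, cnt_succ hj c]
    by_cases hc1 : c.1 = L[j].1
    · have hlt : L[j].2 < c.2 := by
        rcases (pairwise_split hs hj).2 c hc with h | ⟨_, h⟩
        · omega
        · exact h
      have hbd := pos_bound hmem hs hj hc hc1
      rw [Finset.filter_singleton, if_pos ⟨hc1.symm, hbd⟩, if_pos ⟨hc1.symm, hlt⟩]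
      simp [Nat.sub_sub]
    · rw [Finset.filter_singleton, if_neg (by simp; omega),
        if_neg (by rintro ⟨h, _⟩; exact hc1 h.symm)]
      simp

lemma cfg_take (hmem : ∀ b, b ∈ L ↔ b ∈ I.targets)
    (hs : L.Pairwise RightToLeftBottomToTop) :
    ∀ j ≤ L.length, runCycles I.init ((schedule I L).take j) = mcfg I L j := by
  intro j
  induction j with
  | zero =>
    intro _
    rw [List.take_zero]
    show I.init = mcfg I L 0
    have hpos : pos L 0 = id := by
      funext b
      simp [pos, cnt]
    apply cfg_ext
    · show I.height = fun t => I.height t - countStack (L.take 0) t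
      funext t; simp [countStack]
    · show I.targets = (L.drop 0).toFinset.image (pos L 0)
      rw [List.drop_zero, hpos, Finset.image_id, toFinset_eq_targets hmem]
  | succ j ih =>
    intro h
    have hj : j < L.length := h
    rw [schedule_take_succ I hj, runCycles_append, ih hj.le]
    exact after_step hmem hs hj

lemma valid_take (hwf : I.WellFormed)
    (hcond : ∀ b ∈ I.targets, ∀ t < b.1, b.2 - I.R b ≤ I.height t)
    (hmem : ∀ b, b ∈ L ↔ b ∈ I.targets)
    (hs : L.Pairwise RightToLeftBottomToTop) :
    ∀ j ≤ L.length, ValidFrom I.init ((schedule I L).take j) := by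
  intro j
  induction j with
  | zero => intro _; rw [List.take_zero]; trivial
  | succ j ih =>
    intro h
    have hj : j < L.length := h
    rw [schedule_take_succ I hj]
    refine validFrom_concat (ih hj.le) ?_
    rw [cfg_take hmem hs j hj.le]
    exact valid_step hwf hcond hmem hs hj

end


/-- If for every target `b` and every stack `t < s b` one
has `h t ≥ h b − R b`, then the schedule retrieving the targets one per
cycle, processing stacks from right to left and, within each stack, from
bottom to top, is a feasible solution; moreover, at the moment each target
`b` is retrieved its current height equals `h b − R b` and every stack to
its left still has its original height (accessibility of `b` under the
specified clearance levels being part of feasibility). -/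
theorem right_to_left_bottom_to_top_schedule_feasible (I : SACRP)
    (hwf : I.WellFormed)
    (hcond : ∀ b ∈ I.targets, ∀ t < b.1, b.2 - I.R b ≤ I.height t)
    (L : List (ℕ × ℕ)) (hmem : ∀ b, b ∈ L ↔ b ∈ I.targets)
    (hsort : L.Pairwise RightToLeftBottomToTop) :
    I.Feasible (schedule I L) ∧
      ∀ j : Fin L.length,
        ((L.get j).1, (L.get j).2 - I.R (L.get j)) ∈
            (runCycles I.init ((schedule I L).take j)).rem ∧
          ∀ t < (L.get j).1,
            (runCycles I.init ((schedule I L).take j)).height t = I.height t := by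
  have heq : (schedule I L).take L.length = schedule I L := by
    rw [← schedule_length I L]; exact List.take_length
  constructor
  · constructor
    · rw [← heq]
      exact valid_take hwf hcond hmem hsort L.length le_rfl
    · rw [← heq, cfg_take hmem hsort L.length le_rfl]
      simp [mcfg]
  · intro j
    have hj : (j : ℕ) < L.length := j.isLt
    rw [cfg_take hmem hsort j hj.le]
    simp only [List.get_eq_getElem]
    refine ⟨pos_mem_mcfg hmem hsort hj, ?_⟩
    intro t ht
    show I.height t - countStack (L.take ↑j) t = I.height t
    rw [countStack_take_of_lt hsort hj ht, Nat.sub_zero]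

end SACRP
end

section
/- Fix a cycle c, a weakly triangular batch Y with rightmost anchoring target b(Y), and a not-yet-retrieved target b ∉ Y with s(b) ≤ s(Y) at height h = h(b). If every position (h−1, s') for all stacks s' ≤ s(b) is occupied by a target b' that belongs to Y, then Y' = Y ∪ {b} is weakly triangular, and the cycle energy satisfies A(Y') = A(Y) − 1. -/
namespace SACRP

/-- The clearance level used in the cycle retrieving the batch `Z`:
for a stack containing a target of `Z`, everything above its topmost
target is lifted; for a stack without targets of `Z` but with a target of
`Z` to its right, everything above the maximum height of the targets of
`Z` to its right is lifted; all other stacks are left untouched. -/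
def liftLevel (H : ℕ → ℕ) (Z : Finset (ℕ × ℕ)) (t : ℕ) : ℕ :=
  if (Z.filter fun b => b.1 = t).Nonempty then
    ((Z.filter fun b => b.1 = t).sup Prod.snd) + 1
  else if (Z.filter fun b => t < b.1).Nonempty then
    (Z.filter fun b => t < b.1).sup Prod.snd
  else H t

/-- `A Z` : the energy expenditure of the cycle in which the batch `Z` is
retrieved, i.e. the number of unit loads that must be lifted so that every
target of `Z` is accessible when retrieved in an appropriate order. -/
def batchEnergy (m : ℕ) (H : ℕ → ℕ) (Z : Finset (ℕ × ℕ)) : ℕ :=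
  ∑ t ∈ Finset.range m, (H t - liftLevel H Z t)

private lemma chain_step {S : Finset ℕ}
    (hS : ((S.sort (· ≤ ·)).Chain' fun a c => c = a + 1))
    {z c : ℕ} (hz : z ∈ S) (hc : c ∈ S) (hzc : z < c) : z + 1 ∈ S := by
  have hzL : z ∈ S.sort (· ≤ ·) := (Finset.mem_sort _).2 hz
  have hcL : c ∈ S.sort (· ≤ ·) := (Finset.mem_sort _).2 hc
  obtain ⟨i, hi⟩ := List.get_of_mem hzL
  obtain ⟨j, hj⟩ := List.get_of_mem hcL
  have hsorted := Finset.pairwise_sort S (· ≤ ·)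
  simp only [List.Chain'] at hS
  rw [List.isChain_iff_getElem] at hS
  have hlen : (i : ℕ) + 1 < (S.sort (· ≤ ·)).length := by
    by_contra hcon
    have hji : (j : ℕ) ≤ (i : ℕ) := by omega
    rcases eq_or_lt_of_le hji with heq | hlt
    · have hji' : j = i := Fin.ext heq
      rw [hji', hi] at hj; omega
    · have := hsorted.rel_get_of_lt hlt
      rw [hi, hj] at this; omega
  have h2 := hS i (by omega)
  have h3 : (S.sort (· ≤ ·)).get ⟨(i : ℕ) + 1, hlen⟩ = z + 1 := by
    have hi' : (S.sort (· ≤ ·))[(i : ℕ)] = z := hi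
    rw [hi'] at h2
    exact h2
  rw [← Finset.mem_sort (α := ℕ) (· ≤ ·), ← h3]
  exact List.get_mem _ _

private lemma interval_mem {S : Finset ℕ}
    (hS : ((S.sort (· ≤ ·)).Chain' fun a c => c = a + 1))
    {a c z : ℕ} (ha : a ∈ S) (hc : c ∈ S) (h1 : a ≤ z) (h2 : z ≤ c) : z ∈ S := by
  induction z, h1 using Nat.le_induction with
  | base => exact ha
  | succ n hn ih => exact chain_step hS (ih (by omega)) hc (by omega)

private lemma continuous_of_interval {S : Finset ℕ}
    (h : ∀ a ∈ S, ∀ c ∈ S, ∀ z, a ≤ z → z ≤ c → z ∈ S) :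
    (S.sort (· ≤ ·)).Chain' fun a c => c = a + 1 := by
  simp only [List.Chain']
  rw [List.isChain_iff_getElem]
  intro i hi
  have hnd : (S.sort (· ≤ ·)).Nodup := Finset.sort_nodup _ _
  have hsorted := Finset.pairwise_sort S (· ≤ ·)
  have hi1 : i + 1 < (S.sort (· ≤ ·)).length := by omega
  have hii : i < (S.sort (· ≤ ·)).length := by omega
  show (S.sort (· ≤ ·)).get ⟨i + 1, hi1⟩ = (S.sort (· ≤ ·)).get ⟨i, hii⟩ + 1
  have hle : (S.sort (· ≤ ·)).get ⟨i, hii⟩ ≤ (S.sort (· ≤ ·)).get ⟨i + 1, hi1⟩ :=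
    hsorted.rel_get_of_lt (by simp)
  have hne : (S.sort (· ≤ ·)).get ⟨i, hii⟩ ≠ (S.sort (· ≤ ·)).get ⟨i + 1, hi1⟩ := by
    intro he
    have := (hnd.get_inj_iff).1 he
    simp [Fin.ext_iff] at this
  have hmA : (S.sort (· ≤ ·)).get ⟨i, hii⟩ ∈ S := (Finset.mem_sort _).1 (List.get_mem _ _)
  have hmC : (S.sort (· ≤ ·)).get ⟨i + 1, hi1⟩ ∈ S := (Finset.mem_sort _).1 (List.get_mem _ _)
  have hmem : (S.sort (· ≤ ·)).get ⟨i, hii⟩ + 1 ∈ S :=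
    h _ hmA _ hmC ((S.sort (· ≤ ·)).get ⟨i, hii⟩ + 1) (by omega) (by omega)
  obtain ⟨j, hj⟩ := List.get_of_mem ((Finset.mem_sort (α := ℕ) (· ≤ ·)).2 hmem)
  have hij : (i : ℕ) < (j : ℕ) := by
    rcases lt_trichotomy ((j : ℕ)) ((i : ℕ)) with hlt | heq | hgt
    · have := hsorted.rel_get_of_lt (a := j) (b := ⟨i, hii⟩) hlt
      rw [hj] at this; omega
    · have hji' : j = (⟨i, hii⟩ : Fin _) := Fin.ext heq
      rw [hji'] at hj; omega
    · exact hgt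
  have hub : (S.sort (· ≤ ·)).get ⟨i + 1, hi1⟩ ≤ (S.sort (· ≤ ·)).get ⟨i, hii⟩ + 1 := by
    rcases eq_or_lt_of_le (show (i : ℕ) + 1 ≤ (j : ℕ) from hij) with heq | hlt
    · have hji' : (⟨i + 1, hi1⟩ : Fin _) = j := Fin.ext heq
      rw [hji', hj]
    · have := hsorted.rel_get_of_lt (a := ⟨i + 1, hi1⟩) (b := j) hlt
      rw [hj] at this; exact this
  omega

private lemma mem_bheights {Y : Finset (ℕ × ℕ)} {x : ℕ} :
    x ∈ bheights Y ↔ ∃ s, (s, x) ∈ Y := by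
  constructor
  · intro hx
    obtain ⟨a, ha, h2⟩ := Finset.mem_image.1 hx
    exact ⟨a.1, by rw [← h2]; exact ha⟩
  · rintro ⟨s, hs⟩
    exact Finset.mem_image.2 ⟨(s, x), hs, rfl⟩

private lemma le_smax {Y : Finset (ℕ × ℕ)} {s x : ℕ} (h : (s, x) ∈ Y) : s ≤ smax Y x := by
  have hm : (s, x) ∈ Y.filter fun c => c.2 = x := Finset.mem_filter.2 ⟨h, rfl⟩
  exact Finset.le_sup (f := Prod.fst) hm

private lemma smax_of_not_mem {Y : Finset (ℕ × ℕ)} {x : ℕ} (h : x ∉ bheights Y) :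
    smax Y x = 0 := by
  unfold smax
  have he : Y.filter (fun c => c.2 = x) = ∅ := by
    rw [Finset.filter_eq_empty_iff]
    intro c hc hcx
    exact h (mem_bheights.2 ⟨c.1, by rw [← hcx]; exact hc⟩)
  rw [he]
  rfl

private lemma smax_insert (Y : Finset (ℕ × ℕ)) (b : ℕ × ℕ) (x : ℕ) :
    smax (insert b Y) x = if b.2 = x then b.1 ⊔ smax Y x else smax Y x := by
  unfold smax
  simp only [Finset.filter_insert]
  split
  · rw [Finset.sup_insert]
  · rfl

/-- local extension rule 2.  Fix a cycle with a weakly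
triangular batch `Y`, anchored by a rightmost target `bY`, and a
not-yet-retrieved target `b ∉ Y` with `s b ≤ s bY`, at height `h = h b`.
If every position `(s', h − 1)` for all stacks `s' ≤ s b` is occupied by a
target `b'` belonging to `Y`, then `Y' = Y ∪ {b}` is weakly triangular,
and the cycle energies satisfy `A Y' = A Y − 1`. -/
theorem local_rule_two (m : ℕ) (H : ℕ → ℕ) (Y : Finset (ℕ × ℕ))
    (hY : ∀ b' ∈ Y, b'.1 < m ∧ b'.2 < H b'.1)
    (hWT : WeaklyTriangular H Y)
    (bY : ℕ × ℕ) (hmem : bY ∈ Y)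
    (hrightmost : ∀ b' ∈ Y, b'.1 ≤ bY.1)
    (b : ℕ × ℕ) (hnotin : b ∉ Y) (hb : b.1 < m ∧ b.2 < H b.1)
    (hstack : b.1 ≤ bY.1) (hpos : 0 < b.2)
    (hbelow : ∀ s' ≤ b.1, (s', b.2 - 1) ∈ Y) :
    WeaklyTriangular H (insert b Y) ∧
      batchEnergy m H Y = batchEnergy m H (insert b Y) + 1 := by
  obtain ⟨hcont, p, hpS, hpeak, hpre⟩ := hWT
  obtain ⟨hbm, hbH⟩ := hb
  have hgY : (b.1, b.2 - 1) ∈ Y := hbelow b.1 le_rfl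
  have hgS : b.2 - 1 ∈ bheights Y := mem_bheights.2 ⟨b.1, hgY⟩
  have hint : ∀ {a c z : ℕ}, a ∈ bheights Y → c ∈ bheights Y → a ≤ z → z ≤ c →
      z ∈ bheights Y := fun ha hc h1 h2 => interval_mem hcont ha hc h1 h2
  -- The peak lies at height at most b.2 - 1
  have hpg : p ≤ b.2 - 1 := by
    by_contra hcon
    push_neg at hcon
    have hhS : b.2 ∈ bheights Y := hint hgS hpS (by omega) (by omega)
    have hadj : AdjHeights Y (b.2 - 1) b.2 := ⟨hgS, hhS, by omega, fun z _ => by omega⟩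
    rcases (hpre _ _ hadj).1 (by omega) b.1 (le_smax hgY) with hin | habs
    · exact hnotin hin
    · have : H b.1 ≤ b.2 := habs
      omega
  -- No target of Y in stack b.1 at height ≥ b.2
  have hK0 : ∀ k, (b.1, b.2 + k) ∈ Y → False := by
    intro k
    induction k with
    | zero => intro hmem'; exact hnotin hmem'
    | succ n ih =>
      intro hmem'
      have hyS : b.2 + n + 1 ∈ bheights Y := mem_bheights.2 ⟨b.1, hmem'⟩
      have hy1S : b.2 + n ∈ bheights Y := hint hgS hyS (by omega) (by omega)
      have hadj : AdjHeights Y (b.2 + n) (b.2 + n + 1) :=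
        ⟨hy1S, hyS, by omega, fun z _ => by omega⟩
      rcases (hpre _ _ hadj).2 (by omega) b.1 (le_smax hmem') with hin | habs
      · exact ih hin
      · have h1 : b.2 + n + 1 < H b.1 := (hY _ hmem').2
        have h2 : H b.1 ≤ b.2 + n := habs
        omega
  have hK : ∀ y, (b.1, y) ∈ Y → y < b.2 := by
    intro y hy
    by_contra hcon
    exact hK0 (y - b.2) (by rw [show b.2 + (y - b.2) = y by omega]; exact hy)
  have hbh : bheights (insert b Y) = insert b.2 (bheights Y) := by
    unfold bheights
    rw [Finset.image_insert]
  have hsm : ∀ x, smax (insert b Y) x = if b.2 = x then b.1 ⊔ smax Y x else smax Y x :=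
    smax_insert Y b
  -- height continuity of the extended batch
  have hcont' : HeightContinuous (insert b Y) := by
    unfold HeightContinuous
    rw [hbh]
    apply continuous_of_interval
    intro a ha c hc z h1 h2
    rcases Finset.mem_insert.1 hc with rfl | hcS
    · rcases eq_or_lt_of_le h2 with rfl | hzlt
      · exact Finset.mem_insert_self _ _
      · rcases Finset.mem_insert.1 ha with rfl | haS
        · exact absurd hzlt (by omega)
        · exact Finset.mem_insert_of_mem (hint haS hgS h1 (by omega))
    · rcases Finset.mem_insert.1 ha with rfl | haS
      · have hhS : b.2 ∈ bheights Y := hint hgS hcS (by omega) (by omega)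
        exact Finset.mem_insert_of_mem (hint hhS hcS h1 h2)
      · exact Finset.mem_insert_of_mem (hint haS hcS h1 h2)
  -- p is still a peak
  have hpeak' : IsPeak (insert b Y) p := by
    constructor
    · intro x hx y hy hxy hyp
      rw [hbh] at hx hy
      have hxS : x ∈ bheights Y := by
        rcases Finset.mem_insert.1 hx with rfl | h
        · exact absurd hyp (by omega)
        · exact h
      have hyS : y ∈ bheights Y := by
        rcases Finset.mem_insert.1 hy with rfl | h
        · exact absurd hyp (by omega)
        · exact h
      rw [hsm x, hsm y, if_neg (by omega : ¬ b.2 = x), if_neg (by omega : ¬ b.2 = y)]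
      exact hpeak.1 x hxS y hyS hxy hyp
    · intro x hx y hy hpx hxy
      rw [hbh] at hx hy
      rw [hsm x, hsm y]
      by_cases hyh : b.2 = y
      · subst hyh
        rw [if_pos rfl]
        by_cases hxh : b.2 = x
        · subst hxh
          rw [if_pos rfl]
        · rw [if_neg hxh]
          have hxS : x ∈ bheights Y := by
            rcases Finset.mem_insert.1 hx with heq | h
            · exact absurd heq.symm hxh
            · exact h
          have hxg : x ≤ b.2 - 1 := by omega
          have h1 : b.1 ≤ smax Y x :=
            le_trans (le_smax hgY) (hpeak.2 x hxS (b.2 - 1) hgS hpx hxg)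
          have h2 : smax Y b.2 ≤ smax Y x := by
            by_cases hhS : b.2 ∈ bheights Y
            · exact hpeak.2 x hxS b.2 hhS hpx hxy
            · rw [smax_of_not_mem hhS]
              exact Nat.zero_le _
          exact sup_le h1 h2
      · rw [if_neg hyh]
        have hyS : y ∈ bheights Y := by
          rcases Finset.mem_insert.1 hy with heq | h
          · exact absurd heq.symm hyh
          · exact h
        by_cases hxh : b.2 = x
        · subst hxh
          rw [if_pos rfl]
          have hhS : b.2 ∈ bheights Y := hint hgS hyS (by omega) hxy
          exact le_sup_of_le_right (hpeak.2 b.2 hhS y hyS hpx hxy)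
        · rw [if_neg hxh]
          have hxS : x ∈ bheights Y := by
            rcases Finset.mem_insert.1 hx with heq | h
            · exact absurd heq.symm hxh
            · exact h
          exact hpeak.2 x hxS y hyS hpx hxy
  -- prefix-closedness of the extended batch
  have hpre' : PrefixCond H (insert b Y) p := by
    intro x y hadj
    obtain ⟨hx, hy, hxy, hbet⟩ := hadj
    rw [hbh] at hx hy
    have hbet' : ∀ z ∈ bheights Y, ¬(x < z ∧ z < y) := fun z hz =>
      hbet z (by rw [hbh]; exact Finset.mem_insert_of_mem hz)
    constructor
    · intro hxp t ht
      rw [hsm x, if_neg (by omega : ¬ b.2 = x)] at ht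
      have hxS : x ∈ bheights Y := by
        rcases Finset.mem_insert.1 hx with rfl | h
        · exact absurd hxp (by omega)
        · exact h
      by_cases hyh : b.2 = y
      · subst hyh
        exact ((hbet' (b.2 - 1) hgS) ⟨by omega, by omega⟩).elim
      · have hyS : y ∈ bheights Y := by
          rcases Finset.mem_insert.1 hy with heq | h
          · exact absurd heq.symm hyh
          · exact h
        exact Or.imp_left (fun hh => Finset.mem_insert_of_mem hh)
          ((hpre x y ⟨hxS, hyS, hxy, hbet'⟩).1 hxp t ht)
    · intro hpy t ht
      by_cases hyh : b.2 = y
      · subst hyh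
        have hxg : x = b.2 - 1 := by
          by_contra hne
          have hxS : x ∈ bheights Y := by
            rcases Finset.mem_insert.1 hx with heq | h
            · exact absurd hxy (by omega)
            · exact h
          exact hbet' (b.2 - 1) hgS ⟨by omega, by omega⟩
        subst hxg
        rw [hsm, if_pos rfl] at ht
        rcases le_sup_iff.1 ht with h1 | h2
        · exact Or.inl (Finset.mem_insert_of_mem (hbelow t h1))
        · by_cases hhS : b.2 ∈ bheights Y
          · have hadj2 : AdjHeights Y (b.2 - 1) b.2 :=
              ⟨hgS, hhS, by omega, fun z _ => by omega⟩
            exact Or.imp_left (fun hh => Finset.mem_insert_of_mem hh)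
              ((hpre _ _ hadj2).2 (by omega) t h2)
          · rw [smax_of_not_mem hhS] at h2
            exact Or.inl (Finset.mem_insert_of_mem (hbelow t (by omega)))
      · rw [hsm y, if_neg hyh] at ht
        have hyS : y ∈ bheights Y := by
          rcases Finset.mem_insert.1 hy with heq | h
          · exact absurd heq.symm hyh
          · exact h
        have hxS : x ∈ bheights Y := by
          rcases Finset.mem_insert.1 hx with rfl | h
          · exact hint hgS hyS (by omega) (by omega)
          · exact h
        exact Or.imp_left (fun hh => Finset.mem_insert_of_mem hh)
          ((hpre x y ⟨hxS, hyS, hxy, hbet'⟩).2 hpy t ht)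
  -- energy computation
  have hfY : (Y.filter fun c => c.1 = b.1).Nonempty :=
    ⟨(b.1, b.2 - 1), Finset.mem_filter.2 ⟨hgY, rfl⟩⟩
  have hsup : (Y.filter fun c => c.1 = b.1).sup Prod.snd = b.2 - 1 := by
    apply le_antisymm
    · apply Finset.sup_le
      intro c hc
      obtain ⟨hcY, hc1⟩ := Finset.mem_filter.1 hc
      have : c.2 < b.2 := hK c.2 (by rw [← hc1]; exact hcY)
      omega
    · have hm : (b.1, b.2 - 1) ∈ Y.filter fun c => c.1 = b.1 := Finset.mem_filter.2 ⟨hgY, rfl⟩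
      exact Finset.le_sup (f := Prod.snd) hm
  have e1 : liftLevel H Y b.1 = b.2 := by
    unfold liftLevel
    rw [if_pos hfY, hsup]
    omega
  have e2 : liftLevel H (insert b Y) b.1 = b.2 + 1 := by
    unfold liftLevel
    simp only [Finset.filter_insert, if_true]
    rw [if_pos (Finset.insert_nonempty _ _), Finset.sup_insert, hsup]
    omega
  refine ⟨⟨hcont', p, ?_, hpeak', hpre'⟩, ?_⟩
  · rw [hbh]
    exact Finset.mem_insert_of_mem hpS
  · unfold batchEnergy
    have hmain : ∀ t ∈ Finset.range m,
        H t - liftLevel H Y t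
          = (H t - liftLevel H (insert b Y) t) + (if t = b.1 then 1 else 0) := by
      intro t _
      by_cases hteq : t = b.1
      · subst hteq
        rw [e1, e2, if_pos rfl]
        omega
      · have hll : liftLevel H (insert b Y) t = liftLevel H Y t := by
          unfold liftLevel
          simp only [Finset.filter_insert]
          rw [if_neg (show ¬ b.1 = t from fun hh => hteq hh.symm)]
          by_cases htlt : t < b.1
          · have h1 : (Y.filter fun c => c.1 = t).Nonempty :=
              ⟨(t, b.2 - 1), Finset.mem_filter.2 ⟨hbelow t htlt.le, rfl⟩⟩
            rw [if_pos h1, if_pos h1]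
          · rw [if_neg htlt]
        rw [hll, if_neg hteq]
        omega
    rw [Finset.sum_congr rfl hmain, Finset.sum_add_distrib]
    congr 1
    simp [Finset.sum_ite_eq', hbm]


end SACRP
end

section
/- (Dominance Rule 1.) Consider a SACRP configuration (a feasible instance together with a set of already retrieved targets) in which a not-yet-retrieved accessible target b satisfies: (1) b is the only non-retrieved target in its stack; (2) b is the highest non-retrieved target; (3) b lies in the leftmost stack that still contains a non-retrieved target. Then there exists a minimum-energy completion of the retrieval process whose first retrieved target is b; in particular, b can never be retrieved together with any other target in the same cycle, retrieving b does not change the accessibility of any other target, and retrieving b earlier can only reduce the energy expenditure of later retrievals. -/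
namespace SACRP

/-- Well-formedness of a configuration with `m` stacks. -/
def ConfigWF (m : ℕ) (cfg : Config) : Prop :=
  ∀ b ∈ cfg.rem, b.1 < m ∧ b.2 < cfg.height b.1

/-- A remaining target is accessible in a configuration: suitable clearance
levels exist for it, i.e. its own stack reaches above it and every stack to
its left reaches its height. -/
def Retrievable (cfg : Config) (b : ℕ × ℕ) : Prop :=
  b.2 < cfg.height b.1 ∧ ∀ s < b.1, b.2 ≤ cfg.height s

/-- The first target retrieved by a sequence of cycles. -/
def firstRetrieved (sol : List Cycle) : Option (ℕ × ℕ) :=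
  ((sol.map Cycle.seq).flatten).head?

/-! ## Auxiliary material for Dominance Rule 1 -/

/-- Invariant maintained during a run: every remaining target is `b` or lies
strictly right of and strictly below `b`; moreover while `b` remains, the
heights of the stacks up to `b.1` are unchanged. -/
def Inv2 (cfg0 : Config) (b : ℕ × ℕ) (C : Config) : Prop :=
  (∀ x ∈ C.rem, x = b ∨ (b.1 < x.1 ∧ x.2 < b.2)) ∧
  (b ∈ C.rem → ∀ t ≤ b.1, C.height t = cfg0.height t)

private lemma len_le_one {α : Type*} {l : List α} {a : α} (hnd : l.Nodup)
    (h : ∀ x ∈ l, x = a) : l.length ≤ 1 := by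
  cases l with
  | nil => simp
  | cons x t =>
    rcases t with _ | ⟨y, t'⟩
    · simp
    · have hx := h x (by simp)
      have hy := h y (by simp)
      subst hx
      rw [hy] at hnd
      simp [List.nodup_cons] at hnd

private lemma eq_singleton_of_nodup {α : Type*} {l : List α} {a : α} (hnd : l.Nodup)
    (ha : a ∈ l) (h : ∀ x ∈ l, x = a) : l = [a] := by
  cases l with
  | nil => simp at ha
  | cons x t =>
    have hx : x = a := h x (by simp)
    subst hx
    cases t with
    | nil => rfl
    | cons y t' =>
      have hy : y = x := h y (by simp)
      rw [hy] at hnd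
      simp [List.nodup_cons] at hnd

private lemma not_mem_take_of_nodup {α : Type*} [DecidableEq α] {l : List α}
    (hnd : l.Nodup) (i : Fin l.length) : l.get i ∉ l.take i := by
  intro hmem
  obtain ⟨k, hk, hget⟩ := List.getElem_of_mem hmem
  rw [List.getElem_take] at hget
  have hki : k < (i : ℕ) := by
    have := hk
    simp only [List.length_take] at this
    omega
  have hkl : k < l.length := lt_of_lt_of_le hki (le_of_lt i.2) |>.trans_le (le_rfl)
  have : l[k] = l[(i : ℕ)] := by
    rw [hget]
    rfl
  have := (hnd.getElem_inj_iff).1 this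
  omega

/-- Every element of the sequence of a valid cycle is a remaining target. -/
lemma seq_subset_rem {C : Config} {c : Cycle} (hv : ValidCycle C c) :
    ∀ x ∈ c.seq, x ∈ C.rem := by
  intro x hx
  obtain ⟨i, hi⟩ := List.mem_iff_get.1 hx
  have := (hv.2.2 i).1
  rwa [hi] at this

private lemma filter_stack_nil {b : ℕ × ℕ} {C : Config}
    (hInv1 : ∀ x ∈ C.rem, x = b ∨ (b.1 < x.1 ∧ x.2 < b.2))
    {l : List (ℕ × ℕ)} (hl : ∀ x ∈ l, x ∈ C.rem) (hbl : b ∉ l) :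
    (l.filter fun x => x.1 = b.1) = [] := by
  rw [List.filter_eq_nil_iff]
  intro x hx
  simp only [decide_eq_true_eq]
  intro hx1
  rcases hInv1 x (hl x hx) with h | ⟨h, _⟩
  · exact hbl (h ▸ hx)
  · omega

/-- In-cycle dominance: if `b` is retrieved in a valid cycle (under the
invariant), then it is the only target retrieved in that cycle. -/
lemma seq_eq_single {b : ℕ × ℕ} {C : Config} {c : Cycle}
    (hInv1 : ∀ x ∈ C.rem, x = b ∨ (b.1 < x.1 ∧ x.2 < b.2))
    (hv : ValidCycle C c) (hbmem : b ∈ c.seq) : c.seq = [b] := by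
  obtain ⟨hcl, hnd, hax⟩ := hv
  obtain ⟨i, hi⟩ := List.mem_iff_get.1 hbmem
  have hsub : ∀ x ∈ c.seq, x ∈ C.rem := seq_subset_rem ⟨hcl, hnd, hax⟩
  -- the clearance of stack b.1 equals b.2 + 1
  have hclear : c.clear b.1 = b.2 + 1 := by
    have h1 := (hax i).2.1
    rw [hi] at h1
    unfold dres at h1
    have hnotmem : b ∉ c.seq.take i := by
      have := not_mem_take_of_nodup hnd i
      rwa [hi] at this
    have hfil : ((c.seq.take i).filter fun x => x.1 = b.1) = [] :=
      filter_stack_nil hInv1 (fun x hx => hsub x (List.mem_of_mem_take hx)) hnotmem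
    rw [hfil] at h1
    simpa using h1
  have hall : ∀ x ∈ c.seq, x = b := by
    intro x hx
    by_contra hne
    obtain ⟨i', hi'⟩ := List.mem_iff_get.1 hx
    have hxrem : x ∈ C.rem := hsub x hx
    rcases hInv1 x hxrem with h | ⟨hlt, hlt2⟩
    · exact hne h
    have h2 := (hax i').2.2 b.1 (by rw [hi']; exact hlt)
    rw [hi'] at h2
    unfold dres at h2
    have hlen : ((c.seq.take i').filter fun y => y.1 = b.1).length ≤ 1 := by
      apply len_le_one (a := b) ((hnd.sublist (List.take_sublist _ _)).filter _)
      intro y hy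
      have hy1 := List.mem_of_mem_filter hy
      have hy2 : y.1 = b.1 := by
        have := List.of_mem_filter hy
        simpa using this
      rcases hInv1 y (hsub y (List.mem_of_mem_take hy1)) with h | ⟨h, _⟩
      · exact h
      · omega
    omega
  exact eq_singleton_of_nodup hnd hbmem hall

/-- `b` is fixed by removal of a batch avoiding the part of its stack below it. -/
private lemma fall_self {b : ℕ × ℕ} {S : Finset (ℕ × ℕ)}
    (h : ∀ a ∈ S, ¬(a.1 = b.1 ∧ a.2 < b.2)) : fall S b = b := by
  unfold fall
  have : (S.filter fun a => a.1 = b.1 ∧ a.2 < b.2) = ∅ :=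
    Finset.filter_eq_empty_iff.2 (fun {a} ha => h a ha)
  rw [this]
  simp

private lemma batch_not_stack {b : ℕ × ℕ} {C : Config}
    (hInv1 : ∀ x ∈ C.rem, x = b ∨ (b.1 < x.1 ∧ x.2 < b.2))
    {S : Finset (ℕ × ℕ)} (hS : ∀ a ∈ S, a ∈ C.rem) (hbS : b ∉ S) :
    ∀ a ∈ S, b.1 < a.1 := by
  intro a ha
  rcases hInv1 a (hS a ha) with h | ⟨h, _⟩
  · exact absurd (h ▸ ha) hbS
  · exact h

/-- The invariant is preserved by any valid cycle. -/
lemma inv2_afterCycle {cfg0 : Config} {b : ℕ × ℕ} {C : Config} {c : Cycle}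
    (hInv : Inv2 cfg0 b C) (hv : ValidCycle C c) : Inv2 cfg0 b (C.afterCycle c) := by
  have hsub : ∀ x ∈ c.seq, x ∈ C.rem := seq_subset_rem hv
  have hSsub : ∀ a ∈ c.seq.toFinset, a ∈ C.rem := fun a ha =>
    hsub a (List.mem_toFinset.1 ha)
  constructor
  · intro x hx
    simp only [Config.afterCycle, removeBatch, Finset.mem_image, Finset.mem_sdiff] at hx
    obtain ⟨y, ⟨hyrem, hyS⟩, hyx⟩ := hx
    rcases hInv.1 y hyrem with h | ⟨h1, h2⟩
    · subst h
      left
      rw [← hyx]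
      exact fall_self (fun a ha hcon => by
        rcases hInv.1 a (hSsub a ha) with h' | ⟨h', _⟩
        · exact hyS (h' ▸ ha)
        · omega)
    · right
      rw [← hyx]
      unfold fall
      constructor
      · exact h1
      · simp only
        omega
  · intro hbmem t ht
    -- first show b was remaining and not retrieved
    simp only [Config.afterCycle, removeBatch, Finset.mem_image, Finset.mem_sdiff] at hbmem
    obtain ⟨y, ⟨hyrem, hyS⟩, hyx⟩ := hbmem
    have hyb : y = b := by
      rcases hInv.1 y hyrem with h | ⟨h1, _⟩
      · exact h
      · exfalso
        have : (fall (c.seq.toFinset) y).1 = y.1 := rfl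
        rw [hyx] at this
        omega
    subst hyb
    have hcnt : (c.seq.toFinset.filter fun a => a.1 = t) = ∅ := by
      apply Finset.filter_eq_empty_iff.2
      intro a ha hat
      have := batch_not_stack hInv.1 hSsub hyS a ha
      omega
    simp only [Config.afterCycle, removeBatch, hcnt]
    simpa using hInv.2 hyrem t ht

/-- `b` survives a valid cycle which does not retrieve it. -/
lemma b_mem_afterCycle {b : ℕ × ℕ} {C : Config} {c : Cycle}
    (hInv1 : ∀ x ∈ C.rem, x = b ∨ (b.1 < x.1 ∧ x.2 < b.2))
    (hv : ValidCycle C c) (hbC : b ∈ C.rem) (hbs : b ∉ c.seq) :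
    b ∈ (C.afterCycle c).rem := by
  have hsub : ∀ a ∈ c.seq.toFinset, a ∈ C.rem := fun a ha =>
    seq_subset_rem hv a (List.mem_toFinset.1 ha)
  have hbS : b ∉ c.seq.toFinset := fun h => hbs (List.mem_toFinset.1 h)
  simp only [Config.afterCycle, removeBatch, Finset.mem_image, Finset.mem_sdiff]
  refine ⟨b, ⟨hbC, hbS⟩, ?_⟩
  exact fall_self (fun a ha hcon => by
    have := batch_not_stack hInv1 hsub hbS a ha
    omega)

/-- Part (B): in every valid run, whenever `b` appears in the sequence of a
cycle, it is alone in that cycle. -/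
lemma partB {cfg0 : Config} {b : ℕ × ℕ} :
    ∀ (sol : List Cycle) (C : Config), Inv2 cfg0 b C → ValidFrom C sol →
      ∀ j : Fin sol.length, b ∈ (sol.get j).seq → (sol.get j).seq = [b] := by
  intro sol
  induction sol with
  | nil => intro C _ _ j; exact absurd j.2 (by simp)
  | cons c cs ih =>
    intro C hInv hvf j hbj
    rcases hvf with ⟨hv, hvf'⟩
    rcases j with ⟨jv, hj⟩
    cases jv with
    | zero => exact seq_eq_single hInv.1 hv hbj
    | succ k =>
      have hk : k < cs.length := by simpa using hj
      exact ih (C.afterCycle c) (inv2_afterCycle hInv hv) hvf' ⟨k, hk⟩ hbj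

/-- Locating the first cycle retrieving `b`. -/
lemma exists_first {cfg0 : Config} {b : ℕ × ℕ} :
    ∀ (sol : List Cycle) (C : Config), Inv2 cfg0 b C → b ∈ C.rem →
      ValidFrom C sol → (runCycles C sol).rem = ∅ →
      ∃ pre cj post, sol = pre ++ cj :: post ∧ (∀ c' ∈ pre, b ∉ c'.seq) ∧ cj.seq = [b] := by
  intro sol
  induction sol with
  | nil =>
    intro C _ hbC _ hrun
    simp only [runCycles] at hrun
    rw [hrun] at hbC
    simp at hbC
  | cons c cs ih =>
    intro C hInv hbC hvf hrun
    rcases hvf with ⟨hv, hvf'⟩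
    by_cases hbs : b ∈ c.seq
    · exact ⟨[], c, cs, rfl, by simp, seq_eq_single hInv.1 hv hbs⟩
    · obtain ⟨pre, cj, post, h1, h2, h3⟩ :=
        ih (C.afterCycle c) (inv2_afterCycle hInv hv)
          (b_mem_afterCycle hInv.1 hv hbC hbs) hvf' hrun
      exact ⟨c :: pre, cj, post, by rw [h1]; rfl, by
        intro c' hc'
        rcases List.mem_cons.1 hc' with h | h
        · exact h ▸ hbs
        · exact h2 c' h, h3⟩

lemma Config.ext' {C D : Config} (h1 : C.height = D.height) (h2 : C.rem = D.rem) :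
    C = D := by
  cases C; cases D
  simp only at h1 h2
  rw [h1, h2]

/-- The clearance levels of the optimal first cycle retrieving `b`. -/
def clear0 (b : ℕ × ℕ) (H : ℕ → ℕ) (t : ℕ) : ℕ :=
  if t < b.1 then b.2 else if t = b.1 then b.2 + 1 else H t

/-- Capping the clearance of stack `b.1` of a cycle. -/
def tweak (b : ℕ × ℕ) (h1 : ℕ) (c : Cycle) : Cycle :=
  ⟨fun t => if t = b.1 then min (c.clear t) (h1 - 1) else c.clear t, c.seq⟩

private lemma image_fall_erase {b : ℕ × ℕ} {C : Config}
    (hInv1 : ∀ x ∈ C.rem, x = b ∨ (b.1 < x.1 ∧ x.2 < b.2))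
    {S : Finset (ℕ × ℕ)} (hS : ∀ a ∈ S, a ∈ C.rem) (hbS : b ∉ S) :
    ((C.rem.erase b) \ S).image (fall S) = ((C.rem \ S).image (fall S)).erase b := by
  have hstack := batch_not_stack hInv1 hS hbS
  have hfb : fall S b = b := fall_self (fun a ha hcon => by have := hstack a ha; omega)
  ext x
  simp only [Finset.mem_image, Finset.mem_sdiff, Finset.mem_erase]
  constructor
  · rintro ⟨y, ⟨⟨hyb, hyrem⟩, hyS⟩, hyx⟩
    have hy1 : b.1 < y.1 := by
      rcases hInv1 y hyrem with h | ⟨h, _⟩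
      · exact absurd h hyb
      · exact h
    constructor
    · intro hxb
      have : (fall S y).1 = y.1 := rfl
      rw [hyx, hxb] at this
      omega
    · exact ⟨y, ⟨hyrem, hyS⟩, hyx⟩
  · rintro ⟨hxb, y, ⟨hyrem, hyS⟩, hyx⟩
    refine ⟨y, ⟨⟨?_, hyrem⟩, hyS⟩, hyx⟩
    intro hyb
    subst hyb
    rw [hfb] at hyx
    exact hxb hyx.symm

/-- Effect of a singleton cycle retrieving `b`. -/
lemma afterCycle_single {b : ℕ × ℕ} {C : Config} {c : Cycle}
    (hInv1 : ∀ x ∈ C.rem, x = b ∨ (b.1 < x.1 ∧ x.2 < b.2))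
    (hcseq : c.seq = [b]) :
    (C.afterCycle c).rem = C.rem.erase b ∧
      ∀ t, (C.afterCycle c).height t = if t = b.1 then C.height t - 1 else C.height t := by
  have hST : c.seq.toFinset = {b} := by rw [hcseq]; simp
  constructor
  · ext x
    simp only [Config.afterCycle, removeBatch, hST, Finset.mem_image, Finset.mem_sdiff,
      Finset.mem_singleton, Finset.mem_erase]
    constructor
    · rintro ⟨y, ⟨hyrem, hyb⟩, hyx⟩
      have hy1 : b.1 < y.1 := by
        rcases hInv1 y hyrem with h | ⟨h, _⟩
        · exact absurd h hyb
        · exact h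
      have hfy : fall {b} y = y := by
        apply fall_self
        intro a ha
        simp only [Finset.mem_singleton] at ha
        subst ha
        omega
      rw [hfy] at hyx
      subst hyx
      exact ⟨hyb, hyrem⟩
    · rintro ⟨hxb, hxrem⟩
      have hx1 : b.1 < x.1 := by
        rcases hInv1 x hxrem with h | ⟨h, _⟩
        · exact absurd h hxb
        · exact h
      refine ⟨x, ⟨hxrem, hxb⟩, ?_⟩
      apply fall_self
      intro a ha
      simp only [Finset.mem_singleton] at ha
      subst ha
      omega
  · intro t
    have hcard : ({b} : Finset (ℕ × ℕ)).filter (fun a => a.1 = t) =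
        if b.1 = t then {b} else ∅ := Finset.filter_singleton _ b
    simp only [Config.afterCycle, removeBatch, hST, hcard]
    by_cases ht : t = b.1
    · subst ht
      simp
    · rw [if_neg (fun h => ht h.symm), if_neg ht]
      simp

/-- The simulation: pulling the solo cycle retrieving `b` to the front. -/
lemma sim_run (m : ℕ) (cfg0 : Config) (b : ℕ × ℕ) (hb2 : b.2 + 1 ≤ cfg0.height b.1) :
    ∀ (pre : List Cycle) (cj : Cycle) (post : List Cycle) (C D : Config),
      Inv2 cfg0 b C → b ∈ C.rem →
      D.rem = C.rem.erase b →
      (∀ t, D.height t = if t = b.1 then C.height t - 1 else C.height t) →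
      ValidFrom C (pre ++ cj :: post) →
      (∀ c' ∈ pre, b ∉ c'.seq) → cj.seq = [b] →
      ValidFrom D (pre.map (tweak b (cfg0.height b.1)) ++ post) ∧
      runCycles D (pre.map (tweak b (cfg0.height b.1)) ++ post) =
        runCycles C (pre ++ cj :: post) ∧
      energyFrom m D (pre.map (tweak b (cfg0.height b.1)) ++ post) +
          (∑ t ∈ Finset.range m, (cfg0.height t - clear0 b cfg0.height t)) ≤
        energyFrom m C (pre ++ cj :: post) := by
  intro pre
  induction pre with
  | nil =>
    intro cj post C D hInv hbC hDrem hDh hvf hpre hcj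
    simp only [List.nil_append, List.map_nil] at *
    rcases hvf with ⟨hv, hvf'⟩
    -- C.afterCycle cj = D
    have hsingle := afterCycle_single hInv.1 hcj
    have hEq : C.afterCycle cj = D := by
      apply Config.ext'
      · funext t
        rw [hsingle.2 t, hDh t]
      · rw [hsingle.1, hDrem]
    -- accessibility of b in cycle cj
    rcases cj with ⟨cl, seq⟩
    simp only at hcj
    subst hcj
    have hax := hv.2.2 ⟨0, by simp⟩
    have hget : (Cycle.mk cl [b]).seq.get ⟨0, by simp⟩ = b := rfl
    rw [hget] at hax
    have hA := hax.2
    have hclb : cl b.1 = b.2 + 1 := by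
      have := hA.1
      simpa [dres] using this
    have hcls : ∀ s < b.1, cl s = b.2 := by
      intro s hs
      have := hA.2 s hs
      simpa [dres] using this
    have hh := hInv.2 hbC
    refine ⟨hEq ▸ hvf', by simp [runCycles, hEq], ?_⟩
    have hE : energyFrom m C (Cycle.mk cl [b] :: post) =
        cycleEnergy m C (Cycle.mk cl [b]) + energyFrom m (C.afterCycle (Cycle.mk cl [b])) post := rfl
    rw [hE, hEq]
    have he0 : (∑ t ∈ Finset.range m, (cfg0.height t - clear0 b cfg0.height t)) ≤
        cycleEnergy m C (Cycle.mk cl [b]) := by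
      apply Finset.sum_le_sum
      intro t _
      show cfg0.height t - clear0 b cfg0.height t ≤ C.height t - cl t
      unfold clear0
      by_cases ht1 : t < b.1
      · rw [if_pos ht1, hh t (le_of_lt ht1), hcls t ht1]
      · by_cases ht2 : t = b.1
        · subst ht2
          rw [if_neg ht1, if_pos rfl, hh b.1 le_rfl, hclb]
        · rw [if_neg ht1, if_neg ht2]
          simp
    omega
  | cons c pre' ih =>
    intro cj post C D hInv hbC hDrem hDh hvf hpre hcj
    rw [List.cons_append] at hvf
    rcases hvf with ⟨hv, hvf'⟩
    have hbc : b ∉ c.seq := hpre c (by simp)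
    have hsub : ∀ x ∈ c.seq, x ∈ C.rem := seq_subset_rem hv
    have hSsub : ∀ a ∈ c.seq.toFinset, a ∈ C.rem := fun a ha => hsub a (List.mem_toFinset.1 ha)
    have hbS : b ∉ c.seq.toFinset := fun h => hbc (List.mem_toFinset.1 h)
    have hstack := batch_not_stack hInv.1 hSsub hbS
    have hhC : C.height b.1 = cfg0.height b.1 := hInv.2 hbC b.1 le_rfl
    set h1 := cfg0.height b.1 with hh1
    -- the tweaked cycle is valid from D
    have hfil : ∀ (n : ℕ), ((c.seq.take n).filter fun y => y.1 = b.1) = [] := by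
      intro n
      exact filter_stack_nil hInv.1 (fun x hx => hsub x (List.mem_of_mem_take hx))
        (fun h => hbc (List.mem_of_mem_take h))
    have hvD : ValidCycle D (tweak b h1 c) := by
      refine ⟨?_, hv.2.1, ?_⟩
      · intro t
        by_cases ht : t = b.1
        · subst ht
          rw [hDh b.1, if_pos rfl, hhC]
          simp [tweak]
        · rw [hDh t, if_neg ht]
          simpa [tweak, ht] using hv.1 t
      · intro i
        show c.seq.get i ∈ D.rem ∧
          Accessible (dres (tweak b h1 c).clear (c.seq.take i)) (c.seq.get i)
        have hold := hv.2.2 i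
        set x := c.seq.get i with hx
        have hxrem : x ∈ C.rem := hold.1
        have hxb : x ≠ b := by
          intro h
          apply hbc
          rw [← h, hx]
          exact List.get_mem c.seq i
        have hx1 : b.1 < x.1 ∧ x.2 < b.2 := by
          rcases hInv.1 x hxrem with h | h
          · exact absurd h hxb
          · exact h
        have hdres : ∀ t, t ≠ b.1 →
            dres (tweak b h1 c).clear (c.seq.take i) t = dres c.clear (c.seq.take i) t := by
          intro t ht
          simp [dres, tweak, ht]
        refine ⟨?_, ?_, ?_⟩
        · rw [hDrem]
          exact Finset.mem_erase.2 ⟨hxb, hxrem⟩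
        · rw [hdres x.1 (by omega)]
          exact hold.2.1
        · intro s hs
          by_cases hsb : s = b.1
          · subst hsb
            have hclb : c.clear b.1 = x.2 := by
              have := hold.2.2 b.1 hx1.1
              simpa [dres, hfil] using this
            have htw : dres (tweak b h1 c).clear (c.seq.take i) b.1 =
                min (c.clear b.1) (h1 - 1) := by
              simp [dres, tweak, hfil]
            rw [htw, hclb, min_eq_left (by omega)]
          · rw [hdres s hsb]
            exact hold.2.2 s hs
    -- the configurations after the cycle
    have hcnt0 : (c.seq.toFinset.filter fun a => a.1 = b.1) = ∅ := by
      apply Finset.filter_eq_empty_iff.2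
      intro a ha hab
      have := hstack a ha
      omega
    have hrem' : (D.afterCycle (tweak b h1 c)).rem = ((C.afterCycle c).rem).erase b := by
      show ((D.rem \ c.seq.toFinset).image (fall c.seq.toFinset)) = _
      rw [hDrem]
      exact image_fall_erase hInv.1 hSsub hbS
    have hh' : ∀ t, (D.afterCycle (tweak b h1 c)).height t =
        if t = b.1 then (C.afterCycle c).height t - 1 else (C.afterCycle c).height t := by
      intro t
      show D.height t - (c.seq.toFinset.filter fun a => a.1 = t).card = _
      by_cases ht : t = b.1
      · subst ht
        rw [if_pos rfl, hcnt0, hDh b.1, if_pos rfl]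
        show C.height b.1 - 1 - 0 = (C.height b.1 - (c.seq.toFinset.filter fun a => a.1 = b.1).card) - 1
        rw [hcnt0]
        simp
      · rw [if_neg ht, hDh t, if_neg ht]
        rfl
    obtain ⟨ih1, ih2, ih3⟩ := ih cj post (C.afterCycle c) (D.afterCycle (tweak b h1 c))
      (inv2_afterCycle hInv hv) (b_mem_afterCycle hInv.1 hv hbC hbc) hrem' hh' hvf' 
      (fun c' hc' => hpre c' (by simp [hc'])) hcj
    -- energy of the tweaked cycle
    have hEc : cycleEnergy m D (tweak b h1 c) ≤ cycleEnergy m C c := by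
      apply Finset.sum_le_sum
      intro t _
      by_cases ht : t = b.1
      · subst ht
        have hle : c.clear b.1 ≤ h1 := hhC ▸ hv.1 b.1
        have htw : (tweak b h1 c).clear b.1 = min (c.clear b.1) (h1 - 1) := by
          simp [tweak]
        rw [hDh b.1, if_pos rfl, hhC, htw]
        rcases Nat.le_total (c.clear b.1) (h1 - 1) with h | h
        · rw [min_eq_left h]
          omega
        · rw [min_eq_right h]
          omega
      · rw [hDh t, if_neg ht]
        simp [tweak, ht]
    refine ⟨?_, ?_, ?_⟩
    · rw [List.map_cons, List.cons_append]
      exact ⟨hvD, ih1⟩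
    · rw [List.map_cons, List.cons_append, List.cons_append]
      show runCycles (D.afterCycle (tweak b h1 c)) _ = runCycles (C.afterCycle c) _
      exact ih2
    · rw [List.map_cons, List.cons_append, List.cons_append]
      show cycleEnergy m D (tweak b h1 c) +
          energyFrom m (D.afterCycle (tweak b h1 c)) (pre'.map (tweak b h1) ++ post) + _ ≤
        cycleEnergy m C c + energyFrom m (C.afterCycle c) (pre' ++ cj :: post)
      omega

/-- Dominance Rule 1.  Consider a SACRP configuration (a
feasible instance together with a set of already retrieved targets) in
which a not-yet-retrieved accessible target `b` satisfies: (1) `b` is the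
only non-retrieved target in its stack; (2) `b` is the highest
non-retrieved target; (3) `b` lies in the leftmost stack that still
contains a non-retrieved target.  Then there is a minimum-energy completion
of the retrieval process whose first retrieved target is `b`; in
particular, `b` is never retrieved together with any other target in the
same cycle. -/
theorem dominance_rule_one (m : ℕ) (cfg : Config) (hwf : ConfigWF m cfg)
    (hfeas : ∃ sol : List Cycle, Completion cfg sol)
    (b : ℕ × ℕ) (hb : b ∈ cfg.rem) (hacc : Retrievable cfg b)
    (honly : ∀ b' ∈ cfg.rem, b'.1 = b.1 → b' = b)
    (hhighest : ∀ b' ∈ cfg.rem, b' ≠ b → b'.2 < b.2)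
    (hleftmost : ∀ b' ∈ cfg.rem, b.1 ≤ b'.1) :
    (∃ sol : List Cycle, Completion cfg sol ∧ firstRetrieved sol = some b ∧
        ∀ sol' : List Cycle, Completion cfg sol' →
          energyFrom m cfg sol ≤ energyFrom m cfg sol') ∧
      ∀ sol : List Cycle, Completion cfg sol →
        ∀ j : Fin sol.length, b ∈ (sol.get j).seq → (sol.get j).seq = [b] := by
  classical
  have hInv0 : Inv2 cfg b cfg := by
    constructor
    · intro x hx
      by_cases hxb : x = b
      · exact Or.inl hxb
      · right
        refine ⟨?_, hhighest x hx hxb⟩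
        rcases lt_or_eq_of_le (hleftmost x hx) with h | h
        · exact h
        · exact absurd (honly x hx h.symm) hxb
    · intro _ t _
      rfl
  refine ⟨?_, fun sol hsol j => partB sol cfg hInv0 hsol.1 j⟩
  -- a minimum-energy completion
  obtain ⟨sol0, hsol0⟩ := hfeas
  have hEsne : {n | ∃ sol, Completion cfg sol ∧ energyFrom m cfg sol = n}.Nonempty :=
    ⟨energyFrom m cfg sol0, sol0, hsol0, rfl⟩
  obtain ⟨solstar, hstar, hEstar⟩ := Nat.sInf_mem hEsne
  obtain ⟨pre, cj, post, hsplit, hpre, hcj⟩ :=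
    exists_first solstar cfg hInv0 hb hstar.1 hstar.2
  have hb2 : b.2 + 1 ≤ cfg.height b.1 := hacc.1
  -- the first cycle retrieving b alone
  set c0 : Cycle := ⟨clear0 b cfg.height, [b]⟩ with hc0
  have hvc0 : ValidCycle cfg c0 := by
    refine ⟨?_, by simp [hc0], ?_⟩
    · intro t
      show clear0 b cfg.height t ≤ cfg.height t
      unfold clear0
      by_cases ht1 : t < b.1
      · rw [if_pos ht1]
        exact hacc.2 t ht1
      · by_cases ht2 : t = b.1
        · subst ht2
          rw [if_neg ht1, if_pos rfl]
          exact hb2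
        · rw [if_neg ht1, if_neg ht2]
    · intro i
      rcases i with ⟨iv, hiv⟩
      have hiv1 : iv < 1 := by simpa [hc0] using hiv
      have hi0 : iv = 0 := by omega
      subst hi0
      refine ⟨hb, ?_, ?_⟩
      · show dres c0.clear (c0.seq.take 0) b.1 = b.2 + 1
        simp [hc0, dres, clear0]
      · intro s hs
        have hs' : s < b.1 := hs
        show dres c0.clear (c0.seq.take 0) s = b.2
        simp [hc0, dres, clear0, hs']
  have hD := afterCycle_single (b := b) (C := cfg) (c := c0) hInv0.1 (by simp [hc0])
  obtain ⟨hVF, hRun, hEn⟩ := sim_run m cfg b hb2 pre cj post cfg (cfg.afterCycle c0)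
    hInv0 hb hD.1 hD.2 (hsplit ▸ hstar.1) hpre hcj
  set rest := pre.map (tweak b (cfg.height b.1)) ++ post with hrest
  have hEnew : energyFrom m cfg (c0 :: rest) =
      cycleEnergy m cfg c0 + energyFrom m (cfg.afterCycle c0) rest := rfl
  have hEc0 : cycleEnergy m cfg c0 =
      ∑ t ∈ Finset.range m, (cfg.height t - clear0 b cfg.height t) := rfl
  refine ⟨c0 :: rest, ⟨⟨hvc0, hVF⟩, ?_⟩, ?_, ?_⟩
  · show (runCycles (cfg.afterCycle c0) rest).rem = ∅
    rw [hRun, ← hsplit]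
    exact hstar.2
  · rfl
  · intro sol' hsol'
    have h1 : energyFrom m cfg (c0 :: rest) ≤ energyFrom m cfg solstar := by
      rw [hEnew, hEc0, hsplit]
      omega
    have h2 : energyFrom m cfg solstar ≤ energyFrom m cfg sol' := by
      rw [hEstar]
      exact Nat.sInf_le ⟨sol', hsol', rfl⟩
    omega

end SACRP
end
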